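/- arXiv:1201.2020 — 6 statements merged into one kernel-verified Lean document; each statement's English description precedes it below -/
import Mathlib

section
/- The number of sequences (a_1,...,a_n) of natural numbers satisfying a_1 ≤ a_2 ≤ ... ≤ a_n and a_i ≤ m(i-1) for all 1 ≤ i ≤ n equals the Fuss–Catalan number (1/(mn+1)) * binomial((m+1)n, n). -/
/-!
A sequence `a` is recorded as the multiset of its values in `ℤ/(mn+1)`. Reading residue `v` as
`m` up-steps per copy of `v` in the multiset followed by one down-step gives a path that drops
by exactly `1` over a period of length `mn+1`, and `a` is Dyck iff the path stays `≥ 0` before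
its last step. By the cycle lemma exactly one of the `mn+1` translates of any `n`-element
multiset has this property, so `(mn+1) · #Dyck = #{n-multisets on mn+1 points} = C((m+1)n, n)`.
-/

open scoped Classical

/-- An `m`-Dyck sequence of height `n` (0-indexed): weakly increasing with `a i ≤ m * i`. -/
def IsDyck (m n : ℕ) (a : Fin n → ℕ) : Prop :=
  Monotone a ∧ ∀ i : Fin n, a i ≤ m * i.val

/-- `k` is the last index of the primitive subsequence of `a` at position `i`. -/
def IsPrimEnd (m n : ℕ) (a : Fin n → ℕ) (i k : Fin n) : Prop :=
  i ≤ k ∧ (∀ j : Fin n, i < j → j ≤ k → a j - a i < m * (j.val - i.val)) ∧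
    (k.val + 1 = n ∨ ∃ h : k.val + 1 < n, m * (k.val + 1 - i.val) ≤ a ⟨k.val + 1, h⟩ - a i)

/-- The covering relation of the `m`-Tamari lattice: decrease the primitive
subsequence at a position `i+1` with `a i < a (i+1)` by one. -/
def Covers (m n : ℕ) (a b : Fin n → ℕ) : Prop :=
  ∃ (i : ℕ) (h : i + 1 < n) (k : Fin n),
    a ⟨i, Nat.lt_of_succ_lt h⟩ < a ⟨i + 1, h⟩ ∧
    IsPrimEnd m n a ⟨i + 1, h⟩ k ∧
    b = fun j => if (⟨i + 1, h⟩ : Fin n) ≤ j ∧ j ≤ k then a j - 1 else a j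

/-- The order of the `m`-Tamari lattice: reflexive-transitive closure of `Covers`. -/
def TamariLE (m n : ℕ) (a b : Fin n → ℕ) : Prop :=
  Relation.ReflTransGen (Covers m n) a b

open Finset
open Fin.NatCast

theorem cycle_lemma {L : ℕ} {U : ℕ → ℤ} (hU : ∀ k, U (k + L) = U k - 1) :
    ∃! d, d < L ∧ ∀ j < L, U d ≤ U (d + j) := by
  have hL : 0 < L := Nat.pos_of_ne_zero fun h => by
    have h0 := hU 0
    simp only [h, add_zero] at h0
    omega
  -- the first minimiser of `U` on `[0, L)`: its strict advantage over earlier points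
  -- absorbs the drop by one after a full period
  obtain ⟨d, hdL, hd⟩ :=
    (range L).exists_min_image (fun k => toLex (U k, k)) ⟨0, mem_range.2 hL⟩
  have hd : ∀ e < L, U d < U e ∨ U d = U e ∧ d ≤ e := fun e he => by
    simpa [Prod.Lex.toLex_le_toLex] using hd e (mem_range.2 he)
  rw [mem_range] at hdL
  have good : ∀ j < L, U d ≤ U (d + j) := by
    intro j hj
    by_cases hdj : d + j < L
    · rcases hd _ hdj with h | h <;> omega
    · have hwrap : U (d + j) = U (d + j - L) - 1 := by
        rw [← hU, Nat.sub_add_cancel (by omega)]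
      rcases hd (d + j - L) (by omega) with h | h <;> omega
  refine ⟨d, ⟨hdL, good⟩, fun d' ⟨hd'L, good'⟩ => ?_⟩
  have not_both_good : ∀ e < L, ∀ e' < L, e < e' → (∀ j < L, U e ≤ U (e + j)) →
      (∀ j < L, U e' ≤ U (e' + j)) → False := by
    intro e he e' he' hee' hge hge'
    have h1 := hge (e' - e) (by omega)
    have h2 := hge' (e + L - e') (by omega)
    rw [Nat.add_sub_cancel' hee'.le] at h1
    rw [show e' + (e + L - e') = e + L by omega, hU] at h2
    omega
  rcases lt_trichotomy d' d with h | h | h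
  · exact (not_both_good _ hd'L _ hdL h good' good).elim
  · exact h
  · exact (not_both_good _ hdL _ hd'L h good good').elim

theorem card_eq_card_mul_card_of_existsUnique_vadd {G X : Type*} [AddGroup G] [AddAction G X]
    (P : X → Prop) (h : ∀ x, ∃! g : G, P (g +ᵥ x)) :
    Nat.card X = Nat.card G * Nat.card {x // P x} := by
  choose g hg huniq using h
  rw [← Nat.card_prod]
  refine Nat.card_congr
    { toFun x := (g x, ⟨g x +ᵥ x, hg x⟩)
      invFun p := -p.1 +ᵥ p.2.1
      left_inv x := neg_vadd_vadd _ _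
      right_inv p := ?_ }
  have hp : g (-p.1 +ᵥ p.2.1) = p.1 := (huniq _ p.1 (by simpa using p.2.2)).symm
  ext <;> simp [hp]

instance Sym.instAddAction {G α : Type*} [AddMonoid G] [AddAction G α] {n : ℕ} :
    AddAction G (Sym α n) where
  vadd g s := s.map (g +ᵥ ·)
  zero_vadd s := by change s.map _ = s; simp
  add_vadd g h s := by change s.map _ = (s.map _).map _; simp [Sym.map_map, add_vadd]

def monotoneEquivSym (α : Type*) [LinearOrder α] (n : ℕ) :
    {f : Fin n → α // Monotone f} ≃ Sym α n where
  toFun f := ⟨List.ofFn f.1, by simp⟩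
  invFun s := ⟨fun i => (s.1.sort).get (i.cast (by simp)),
    fun _ _ hij => (Multiset.pairwise_sort _ _).rel_get_of_le hij⟩
  left_inv f := by
    have hsort : (List.ofFn f.1).mergeSort (fun a b => decide (a ≤ b)) = List.ofFn f.1 :=
      List.mergeSort_eq_self _ (List.sortedLE_ofFn_iff.2 f.2).pairwise
    ext i
    simp [hsort]
    rfl
  right_inv s := by
    refine Subtype.ext ?_
    change ((List.ofFn fun i => _ : List α) : Multiset α) = s.1
    conv_rhs => rw [← Multiset.sort_eq s.1 (· ≤ ·)]
    congr 1
    exact List.ext_get (by simp) fun _ _ _ => by simp [Fin.cast]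

theorem Monotone.lt_card_filter_lt_iff {β : Type*} [Preorder β] [DecidableLT β] {n : ℕ}
    {a : Fin n → β} (ha : Monotone a) (i : Fin n) (x : β) :
    (i : ℕ) < #{i' | a i' < x} ↔ a i < x := by
  constructor
  · intro hi
    by_contra hx
    have hsub : ({i' | a i' < x} : Finset (Fin n)) ⊆ Iio i := fun i' hi' => by
      simp only [mem_filter, mem_univ, true_and] at hi'
      exact mem_Iio.2 (lt_of_not_ge fun h => hx ((ha h).trans_lt hi'))
    have := card_le_card hsub
    rw [Fin.card_Iio] at this
    omega
  · intro hx
    have hsub : Iic i ⊆ ({i' | a i' < x} : Finset (Fin n)) := fun i' hi' => by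
      simpa using (ha (mem_Iic.1 hi')).trans_lt hx
    have := card_le_card hsub
    rw [Fin.card_Iic] at this
    omega

section countBelow

variable {L : ℕ} [NeZero L]

/-- The cast `(v : Fin L)` reduces `v` modulo `L`: for `k > L` this counts the periodic extension
of `s` to `ℕ`. -/
def countBelow (s : Multiset (Fin L)) (k : ℕ) : ℕ :=
  ∑ v ∈ range k, s.count (v : Fin L)

theorem countBelow_add_period (s : Multiset (Fin L)) (k : ℕ) :
    countBelow s (k + L) = countBelow s k + Multiset.card s := by
  have hwindow : ∑ v ∈ range L, s.count ((k + v : ℕ) : Fin L) = Multiset.card s := by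
    rw [Finset.sum_range (fun v => s.count ((k + v : ℕ) : Fin L))]
    simp only [Nat.cast_add, Fin.cast_val_eq_self]
    exact (Equiv.sum_comp (Equiv.addLeft (k : Fin L)) (s.count ·)).trans
      (Multiset.sum_count_eq_card fun a _ => mem_univ a)
  rw [countBelow, Finset.sum_range_add, hwindow, countBelow]

theorem countBelow_add_countBelow_map_add (s : Multiset (Fin L)) (c : Fin L) (j : ℕ) :
    countBelow s (-c).val + countBelow (s.map (c + ·)) j = countBelow s ((-c).val + j) := by
  have hcount : ∀ v : ℕ,
      (s.map (c + ·)).count (v : Fin L) = s.count (((-c).val + v : ℕ) : Fin L) := by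
    intro v
    rw [Nat.cast_add, Fin.cast_val_eq_self,
      ← Multiset.count_map_eq_count' (c + ·) s (add_right_injective c), add_neg_cancel_left]
  simp only [countBelow, Finset.sum_range_add, hcount]

theorem countBelow_eq_card_filter {n : ℕ} (b : Fin n → Fin L) {j : ℕ} (hj : j ≤ L) :
    countBelow (List.ofFn b : Multiset (Fin L)) j = #{i | (b i : ℕ) < j} := by
  rw [Finset.card_eq_sum_card_fiberwise (f := fun i => (b i : ℕ)) (t := range j)
    (fun i hi => mem_range.2 (mem_filter.1 hi).2), countBelow, ← Fin.univ_val_map]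
  refine sum_congr rfl fun v hv => ?_
  have hvj := mem_range.1 hv
  have hvL : v < L := hvj.trans_le hj
  rw [Multiset.count_map, filter_filter]
  change #{i | (v : Fin L) = b i} = _
  congr 1
  ext i
  simp only [mem_filter, mem_univ, true_and, Fin.ext_iff, Fin.val_cast_of_lt hvL]
  omega

def pathHeight (m : ℕ) (s : Multiset (Fin L)) (k : ℕ) : ℤ :=
  m * countBelow s k - k

def IsDyckMultiset (m : ℕ) (s : Multiset (Fin L)) : Prop :=
  ∀ j < L, 0 ≤ pathHeight m s j

theorem pathHeight_add_period (m : ℕ) (s : Multiset (Fin L)) (k : ℕ) :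
    pathHeight m s (k + L) = pathHeight m s k + (m * Multiset.card s - L) := by
  simp only [pathHeight, countBelow_add_period]
  push_cast
  ring

theorem pathHeight_map_add (m : ℕ) (s : Multiset (Fin L)) (c : Fin L) (j : ℕ) :
    pathHeight m (s.map (c + ·)) j =
      pathHeight m s ((-c).val + j) - pathHeight m s (-c).val := by
  simp only [pathHeight, ← countBelow_add_countBelow_map_add s c j]
  push_cast
  ring

end countBelow

theorem existsUnique_vadd_isDyckMultiset {m n : ℕ} (s : Sym (Fin (m * n + 1)) n) :
    ∃! c : Fin (m * n + 1), IsDyckMultiset m (c +ᵥ s).toMultiset := by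
  have hcycle : ∀ k, pathHeight m s.toMultiset (k + (m * n + 1)) =
      pathHeight m s.toMultiset k - 1 := by
    intro k
    rw [pathHeight_add_period, Sym.card_coe]
    push_cast
    ring
  have hshift : ∀ c : Fin (m * n + 1), IsDyckMultiset m (c +ᵥ s).toMultiset ↔
      ∀ j < m * n + 1, pathHeight m s.toMultiset (-c).val ≤
        pathHeight m s.toMultiset ((-c).val + j) := by
    intro c
    change (∀ j < _, 0 ≤ pathHeight m (s.toMultiset.map (c + ·)) j) ↔ _
    simp only [pathHeight_map_add, sub_nonneg]
  obtain ⟨d, ⟨hd, hgood⟩, huniq⟩ := cycle_lemma hcycle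
  refine ⟨-⟨d, hd⟩, (hshift _).2 (by simpa using hgood), fun c hc => ?_⟩
  rw [← neg_neg c, neg_inj]
  exact Fin.ext (huniq _ ⟨(-c).isLt, (hshift c).1 hc⟩)

theorem isDyckMultiset_ofFn_iff {m n : ℕ} {b : Fin n → Fin (m * n + 1)} (hb : Monotone b) :
    IsDyckMultiset m (List.ofFn b : Multiset (Fin (m * n + 1))) ↔
      ∀ i, (b i : ℕ) ≤ m * i := by
  have ha : Monotone fun i => (b i : ℕ) := fun _ _ h => hb h
  have hheight : ∀ j < m * n + 1,
      0 ≤ pathHeight m (List.ofFn b : Multiset (Fin (m * n + 1))) j ↔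
        j ≤ m * #{i | (b i : ℕ) < j} := by
    intro j hj
    rw [pathHeight, countBelow_eq_card_filter b hj.le, sub_nonneg]
    norm_cast
  constructor
  · intro hdyck i
    by_contra! hi
    have hbi := (b i).isLt
    have hj : m * i + 1 < m * n + 1 := by
      have := Nat.mul_le_mul_left m i.isLt
      omega
    have hk : #{i' | (b i' : ℕ) < m * i + 1} ≤ i :=
      not_lt.1 ((ha.lt_card_filter_lt_iff i _).not.2 (by omega))
    have := (hheight _ hj).1 (hdyck _ hj)
    have := Nat.mul_le_mul_left m hk
    omega
  · intro hdyck j hj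
    rw [hheight j hj]
    rcases lt_or_ge #{i | (b i : ℕ) < j} n with hk | hk
    · -- the first index outside the filter carries a value `≥ j`
      have hjk := (ha.lt_card_filter_lt_iff ⟨_, hk⟩ j).not.1 (lt_irrefl _)
      have hbk := hdyck ⟨_, hk⟩
      simp only [not_lt] at hjk
      dsimp only at hbk
      omega
    · have := Nat.mul_le_mul_left m hk
      omega

theorem card_dyck_eq_card_isDyckMultiset (m n : ℕ) :
    Nat.card {a : Fin n → ℕ // IsDyck m n a} =
      Nat.card {s : Sym (Fin (m * n + 1)) n // IsDyckMultiset m s.toMultiset} := by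
  let toFin : {a : Fin n → ℕ // IsDyck m n a} ≃
      {b : {b : Fin n → Fin (m * n + 1) // Monotone b} // ∀ i, (b.1 i : ℕ) ≤ m * i} :=
    { toFun a := ⟨⟨fun i => ⟨a.1 i, Nat.lt_succ_of_le ((a.2.2 i).trans
        (Nat.mul_le_mul_left m i.isLt.le))⟩, fun _ _ h => a.2.1 h⟩, a.2.2⟩
      invFun b := ⟨fun i => b.1.1 i, fun _ _ h => b.1.2 h, b.2⟩
      left_inv _ := rfl
      right_inv _ := rfl }
  exact Nat.card_congr <| toFin.trans <|
    (monotoneEquivSym _ n).subtypeEquiv fun b => (isDyckMultiset_ofFn_iff b.2).symm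

theorem dyck_count_fussCatalan_general (m n : ℕ) :
    (m * n + 1) * Nat.card {a : Fin n → ℕ // IsDyck m n a} =
      Nat.choose ((m + 1) * n) n := by
  have hcard := card_eq_card_mul_card_of_existsUnique_vadd
    (fun s : Sym (Fin (m * n + 1)) n => IsDyckMultiset m s.toMultiset)
    existsUnique_vadd_isDyckMultiset
  rw [Nat.card_fin, Nat.card_eq_fintype_card, Sym.card_sym_eq_choose, Fintype.card_fin] at hcard
  rw [card_dyck_eq_card_isDyckMultiset, ← hcard]
  congr 1
  rw [Nat.add_one_mul]
  omega

/-- The number of `m`-Dyck sequences of height `n` is the Fuss–Catalan number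
`(1/(mn+1)) * C((m+1)n, n)`, stated multiplicatively. -/
theorem dyck_count_fussCatalan (m n : ℕ) (hm : 0 < m) (hn : 0 < n) :
    (m * n + 1) * Nat.card {a : Fin n → ℕ // IsDyck m n a} =
      Nat.choose ((m + 1) * n) n :=
  dyck_count_fussCatalan_general m n
end

section
/- If a = (a_1,...,a_n) is an m-Dyck sequence, i ∈ {1,...,n-1} satisfies a_i < a_{i+1}, and (a_{i+1},...,a_k) is the primitive subsequence of a at position i+1, then the sequence a' = (a_1,...,a_i, a_{i+1}-1,...,a_k-1, a_{k+1},...,a_n) is again an m-Dyck sequence. -/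
open scoped Classical

/-- Decreasing the primitive subsequence at a position `i+1` with `a_i < a_{i+1}`
by one yields again an `m`-Dyck sequence. -/
theorem primitive_decrement_isDyck (m n : ℕ) (hm : 0 < m)
    (a : Fin n → ℕ) (ha : IsDyck m n a) (i : ℕ) (h : i + 1 < n)
    (hasc : a ⟨i, Nat.lt_of_succ_lt h⟩ < a ⟨i + 1, h⟩)
    (k : Fin n) (hk : IsPrimEnd m n a ⟨i + 1, h⟩ k) :
    IsDyck m n (fun j => if (⟨i + 1, h⟩ : Fin n) ≤ j ∧ j ≤ k then a j - 1 else a j) := by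
  obtain ⟨hmono, hbound⟩ := ha
  constructor
  · intro p q hpq
    simp only
    by_cases hp : (⟨i + 1, h⟩ : Fin n) ≤ p ∧ p ≤ k
    · by_cases hq : (⟨i + 1, h⟩ : Fin n) ≤ q ∧ q ≤ k
      · simp only [hp, hq, if_true]
        exact Nat.sub_le_sub_right (hmono hpq) 1
      · simp only [hp, hq, if_true, if_false]
        exact le_trans (Nat.sub_le _ _) (hmono hpq)
    · by_cases hq : (⟨i + 1, h⟩ : Fin n) ≤ q ∧ q ≤ k
      · rw [if_neg hp, if_pos hq]
        -- p is outside, q inside; since p ≤ q ≤ k, must have p < i+1, i.e. p ≤ i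
        have hplt : ¬ ((⟨i + 1, h⟩ : Fin n) ≤ p) := by
          intro hc
          exact hp ⟨hc, le_trans hpq hq.2⟩
        have hpi : p ≤ (⟨i, Nat.lt_of_succ_lt h⟩ : Fin n) := by
          have := lt_of_not_ge hplt
          exact Fin.le_def.mpr (Nat.lt_succ_iff.mp (Fin.lt_def.mp this))
        have h1 : a p ≤ a ⟨i, Nat.lt_of_succ_lt h⟩ := hmono hpi
        have h2 : a ⟨i + 1, h⟩ ≤ a q := hmono hq.1
        omega
      · simp only [hp, hq, if_false]
        exact hmono hpq
  · intro j
    simp only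
    by_cases hj : (⟨i + 1, h⟩ : Fin n) ≤ j ∧ j ≤ k
    · simp only [hj, if_true]
      exact le_trans (Nat.sub_le _ _) (hbound j)
    · simp only [hj, if_false]
      exact hbound j
end

section
/- The edge-labeling λ(a,b) = (j, a_j), where j is the least index at which a and b differ, is an EL-labeling of the m-Tamari lattice T_n^(m) with respect to the order (i,x) ≤ (j,y) iff i < j, or i = j and x ≥ y. That is, every interval [a,b] of T_n^(m) contains exactly one rising maximal chain, and this chain is lexicographically first among all maximal chains in [a,b]. -/
open scoped Classical

/-- Extend a sequence on `Fin n` to `ℕ` by `0`. -/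
noncomputable def extSeq (n : ℕ) (x : Fin n → ℕ) : ℕ → ℕ :=
  fun j => if h : j < n then x ⟨j, h⟩ else 0

/-- The least index at which `x` and `y` differ. -/
noncomputable def diffIdx (n : ℕ) (x y : Fin n → ℕ) : ℕ :=
  sInf {j : ℕ | extSeq n x j ≠ extSeq n y j}

/-- The edge label `λ(x,y) = (j, x_j)`, `j` the least index where `x`,`y` differ. -/
noncomputable def lbl (n : ℕ) (x y : Fin n → ℕ) : ℕ × ℕ :=
  (diffIdx n x y, extSeq n x (diffIdx n x y))

/-- Strict order on labels: `(i,x) < (j,y)` iff `i < j`, or `i = j` and `x > y`. -/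
def LblLT (p q : ℕ × ℕ) : Prop := p.1 < q.1 ∨ (p.1 = q.1 ∧ q.2 < p.2)

/-- Weak order on labels. -/
def LblLE (p q : ℕ × ℕ) : Prop := p = q ∨ LblLT p q

/-- The sequence of edge labels of a chain. -/
noncomputable def labels (n : ℕ) (c : List (Fin n → ℕ)) : List (ℕ × ℕ) :=
  List.zipWith (lbl n) c c.tail

/-- A maximal chain in the interval `[a,b]`: a saturated chain of covers from `a` to `b`. -/
def IsMaxChn (m n : ℕ) (a b : Fin n → ℕ) (c : List (Fin n → ℕ)) : Prop :=
  c.Chain' (Covers m n) ∧ c.head? = some a ∧ c.getLast? = some b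

/-- A chain is rising if its label sequence is strictly increasing. -/
noncomputable def Rising (n : ℕ) (c : List (Fin n → ℕ)) : Prop :=
  (labels n c).Chain' LblLT

/-- A chain is falling if its label sequence is weakly decreasing. -/
noncomputable def Falling (n : ℕ) (c : List (Fin n → ℕ)) : Prop :=
  (labels n c).Chain' (fun p q => LblLE q p)

/-- Lexicographic comparison of label sequences. -/
def LexLE (l₁ l₂ : List (ℕ × ℕ)) : Prop := l₁ = l₂ ∨ List.Lex LblLT l₁ l₂

/-! Covers only lower values, so the indices below the first index `j` at which `a` and `b`
differ are never touched on the way from `a` to `b`, and index `j` has to be lowered at some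
point. The key fact is that lowering the primitive subsequence at `j` first still leaves `b`
reachable: a cover at an index `p > j` commutes with it, because the two primitive subsequences are
nested or disjoint, except when `p` directly follows the subsequence at `j` with a tight step,
in which case they merge and two covers at `p` replace one. The chain starting with the label
`(j, a j)` and continuing with the rising chain of the smaller interval is therefore rising.
Any other first step has a label `(p, _)` with `p > j`, so that chain is lexicographically
later, and it is not rising, since the later step lowering index `j` has a smaller label. -/

variable {m n : ℕ}

section Sequences

variable {x : ℕ → ℕ} {i j k p K : ℕ}

/- Sequences are read through `extSeq n a : ℕ → ℕ`, so that indices are plain natural numbers: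
`PrimEnd m n (extSeq n a)` is `IsPrimEnd m n a`, and `IsCoverAt` adds the condition
`a (p - 1) < a p` of `Covers`. -/
structure PrimEnd (m n : ℕ) (x : ℕ → ℕ) (i k : ℕ) : Prop where
  le_end : i ≤ k
  end_lt : k < n
  sub_lt : ∀ q, i < q → q ≤ k → x q - x i < m * (q - i)
  le_sub : k + 1 < n → m * (k + 1 - i) ≤ x (k + 1) - x i

structure IsCoverAt (m n : ℕ) (x : ℕ → ℕ) (p k : ℕ) : Prop extends PrimEnd m n x p k where
  pos : 0 < p
  ascent : x (p - 1) < x p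

def decr (x : ℕ → ℕ) (p k : ℕ) : ℕ → ℕ :=
  fun q => if p ≤ q ∧ q ≤ k then x q - 1 else x q

lemma decr_apply_of_lt {q : ℕ} (hq : q < p) : decr x p k q = x q := by
  simp only [decr]; split_ifs <;> omega

lemma PrimEnd.unique {k' : ℕ} (h : PrimEnd m n x i k) (h' : PrimEnd m n x i k') : k = k' := by
  suffices ∀ {k k'}, PrimEnd m n x i k → PrimEnd m n x i k' → ¬k < k' by
    exact le_antisymm (not_lt.mp (this h' h)) (not_lt.mp (this h h'))
  intro k k' h h' hlt
  have := h'.sub_lt (k + 1) (by have := h.le_end; omega) hlt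
  have := h.le_sub (by have := h'.end_lt; omega)
  omega

lemma IsCoverAt.apply_pos (h : IsCoverAt m n x p k) : 0 < x p :=
  (Nat.zero_le _).trans_lt h.ascent

lemma IsCoverAt.end_le (hj : IsCoverAt m n x j K) (hp : IsCoverAt m n x p k) (hjp : j < p)
    (hpK : p ≤ K) : k ≤ K := by
  by_contra! hKk
  have h1 := hj.le_sub (by have := hp.end_lt; omega)
  have h2 := hp.sub_lt (K + 1) (by omega) hKk
  have h3 := hj.sub_lt p hjp hpK
  have hsplit : m * (K + 1 - p) + m * (p - j) = m * (K + 1 - j) := by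
    rw [← Nat.mul_add, Nat.sub_add_sub_cancel (by omega) hjp.le]
  omega

lemma IsCoverAt.decr_enclosing (hp : IsCoverAt m n x p k) (hjp : j < p) (hkK : k ≤ K)
    (hpos : 0 < x (p - 1)) : IsCoverAt m n (decr x j K) p k := by
  have := hp.ascent
  have := hp.le_end
  refine ⟨⟨hp.le_end, hp.end_lt, fun q h1 h2 => ?_, fun h => ?_⟩, hp.pos, ?_⟩
  · have := hp.sub_lt q h1 h2
    simp only [decr]; split_ifs <;> omega
  · have := hp.le_sub h
    simp only [decr]; split_ifs <;> omega
  · simp only [decr]; split_ifs <;> omega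

lemma IsCoverAt.decr_left (hp : IsCoverAt m n x p k) (hKp : K < p) :
    IsCoverAt m n (decr x j K) p k := by
  have := hp.ascent
  have := hp.le_end
  refine ⟨⟨hp.le_end, hp.end_lt, fun q h1 h2 => ?_, fun h => ?_⟩, hp.pos, ?_⟩
  · have := hp.sub_lt q h1 h2
    simp only [decr]; split_ifs <;> omega
  · have := hp.le_sub h
    simp only [decr]; split_ifs <;> omega
  · simp only [decr]; split_ifs <;> omega

lemma IsCoverAt.decr_right (hj : IsCoverAt m n x j K) (hjp : j < p)
    (hend : k ≤ K ∨ K + 1 < p ∨ m * (K + 1 - j) < x (K + 1) - x j) :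
    IsCoverAt m n (decr x p k) j K := by
  refine ⟨⟨hj.le_end, hj.end_lt, fun q h1 h2 => ?_, fun h => ?_⟩, hj.pos, ?_⟩
  · have := hj.sub_lt q h1 h2
    simp only [decr]; split_ifs <;> omega
  · have := hj.le_sub h
    simp only [decr]; split_ifs <;> omega
  · rw [decr_apply_of_lt (by omega), decr_apply_of_lt hjp]
    exact hj.ascent

lemma IsCoverAt.decr_self (hp : IsCoverAt m n x p k) (hgap : x (p - 1) + 1 < x p) :
    IsCoverAt m n (decr x p k) p k := by
  have := hp.pos
  refine ⟨⟨hp.le_end, hp.end_lt, fun q h1 h2 => ?_, fun h => ?_⟩, hp.pos, ?_⟩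
  · have := hp.sub_lt q h1 h2
    simp only [decr]; split_ifs <;> omega
  · have := hp.le_sub h
    simp only [decr]; split_ifs <;> omega
  · simp only [decr]; split_ifs <;> omega

lemma IsCoverAt.decr_merge (hm : 0 < m) (hj : IsCoverAt m n x j K)
    (hp : IsCoverAt m n x (K + 1) k) (htight : m * (K + 1 - j) = x (K + 1) - x j) :
    IsCoverAt m n (decr x (K + 1) k) j k := by
  have hjK := hj.le_end
  have hKk := hp.le_end
  have hstep : 0 < m * (K + 1 - j) := Nat.mul_pos hm (by omega)
  have hsplit : ∀ q, K + 1 ≤ q → m * (q - (K + 1)) + m * (K + 1 - j) = m * (q - j) :=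
    fun q hq => by rw [← Nat.mul_add, Nat.sub_add_sub_cancel hq (by omega)]
  refine ⟨⟨by omega, hp.end_lt, fun q h1 h2 => ?_, fun h => ?_⟩, hj.pos, ?_⟩
  · rcases lt_trichotomy q (K + 1) with hq | rfl | hq
    · have := hj.sub_lt q h1 (by omega)
      simp only [decr]; split_ifs <;> omega
    · simp only [decr]; split_ifs <;> omega
    · have := hp.sub_lt q hq h2
      have := hsplit q hq.le
      simp only [decr]; split_ifs <;> omega
  · have := hp.le_sub h
    have := hsplit (k + 1) (by omega)
    have : 0 < m * (k + 1 - (K + 1)) := Nat.mul_pos hm (by omega)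
    simp only [decr]; split_ifs <;> omega
  · rw [decr_apply_of_lt (by omega), decr_apply_of_lt (by omega)]
    exact hj.ascent

lemma exists_primEnd (x : ℕ → ℕ) (hi : i < n) : ∃ k, PrimEnd m n x i k := by
  have hex : ∃ t, i < t ∧ (t = n ∨ m * (t - i) ≤ x t - x i) := ⟨n, hi, Or.inl rfl⟩
  have ht := Nat.find_spec hex
  have htn : Nat.find hex ≤ n := Nat.find_min' hex ⟨hi, Or.inl rfl⟩
  refine ⟨Nat.find hex - 1, by omega, by omega, fun q h1 h2 => ?_, fun h => ?_⟩
  · have := Nat.find_min hex (m := q) (by omega)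
    omega
  · rw [Nat.sub_add_cancel (by omega)]
    exact ht.2.resolve_left (by omega)

end Sequences

section FinSequences

variable {a b : Fin n → ℕ} {i j k p q K : ℕ}

def decrSeg (a : Fin n → ℕ) (p k : ℕ) : Fin n → ℕ :=
  fun i => if p ≤ i.val ∧ i.val ≤ k then a i - 1 else a i

lemma extSeq_of_lt (hq : q < n) : extSeq n a q = a ⟨q, hq⟩ := dif_pos hq

lemma extSeq_of_le (hq : n ≤ q) : extSeq n a q = 0 := dif_neg (by omega)

lemma extSeq_fin (i : Fin n) : extSeq n a i = a i := extSeq_of_lt i.isLt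

lemma extSeq_injective : Function.Injective (extSeq n) :=
  fun a b h => funext fun i => by simpa only [extSeq_fin] using congrFun h i

lemma extSeq_decrSeg : extSeq n (decrSeg a p k) = decr (extSeq n a) p k := by
  funext q
  by_cases hq : q < n
  · simp only [extSeq_of_lt hq, decr, decrSeg]
  · simp only [extSeq_of_le (not_lt.mp hq), decr]
    split_ifs <;> rfl

lemma decrSeg_comm (a : Fin n → ℕ) (p k j K : ℕ) :
    decrSeg (decrSeg a p k) j K = decrSeg (decrSeg a j K) p k := by
  funext i
  simp only [decrSeg]
  split_ifs <;> omega

lemma decrSeg_decrSeg_merge (a : Fin n → ℕ) (hjK : j ≤ K) (hKk : K < k) :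
    decrSeg (decrSeg (decrSeg a j K) (K + 1) k) (K + 1) k = decrSeg (decrSeg a (K + 1) k) j k := by
  funext i
  simp only [decrSeg]
  split_ifs <;> omega

lemma isPrimEnd_iff {i k : Fin n} : IsPrimEnd m n a i k ↔ PrimEnd m n (extSeq n a) i k := by
  simp only [IsPrimEnd, Fin.le_def, Fin.lt_def]
  constructor
  · rintro ⟨hik, hsub, hend⟩
    refine ⟨hik, k.isLt, fun q h1 h2 => ?_, fun h => ?_⟩
    · rw [extSeq_of_lt (by omega), extSeq_fin]
      exact hsub ⟨q, by omega⟩ h1 h2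
    · obtain ⟨h', hle⟩ := hend.resolve_left (by omega)
      rwa [extSeq_of_lt h', extSeq_fin]
  · rintro ⟨hik, -, hsub, hend⟩
    refine ⟨hik, fun q h1 h2 => ?_, ?_⟩
    · simpa only [extSeq_fin] using hsub q h1 h2
    · by_cases h : k.val + 1 < n
      · exact Or.inr ⟨h, by simpa only [extSeq_of_lt h, extSeq_fin] using hend h⟩
      · exact Or.inl (by omega)

lemma covers_iff :
    Covers m n a b ↔ ∃ p k, IsCoverAt m n (extSeq n a) p k ∧ b = decrSeg a p k := by
  constructor
  · rintro ⟨i, h, k, hasc, hprim, rfl⟩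
    refine ⟨i + 1, k, ⟨isPrimEnd_iff.mp hprim, i.succ_pos, ?_⟩, ?_⟩
    · rwa [Nat.add_sub_cancel, extSeq_of_lt, extSeq_of_lt]
    · funext i
      simp only [decrSeg, Fin.le_def]
  · rintro ⟨p, k, hc, rfl⟩
    obtain ⟨i, rfl⟩ : ∃ i, p = i + 1 := ⟨p - 1, by have := hc.pos; omega⟩
    have hk := hc.end_lt
    have hp : i + 1 < n := by have := hc.le_end; omega
    refine ⟨i, hp, ⟨k, hk⟩, ?_, isPrimEnd_iff.mpr hc.toPrimEnd, ?_⟩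
    · have := hc.ascent
      rwa [Nat.add_sub_cancel, extSeq_of_lt, extSeq_of_lt hp] at this
    · funext i
      simp only [decrSeg, Fin.le_def]

lemma covers_decrSeg (h : IsCoverAt m n (extSeq n a) p k) : Covers m n a (decrSeg a p k) :=
  covers_iff.mpr ⟨p, k, h, rfl⟩

lemma Covers.extSeq_le (h : Covers m n a b) (q : ℕ) : extSeq n b q ≤ extSeq n a q := by
  obtain ⟨p, k, -, rfl⟩ := covers_iff.mp h
  rw [extSeq_decrSeg, decr]
  split_ifs <;> omega

lemma TamariLE.extSeq_le (h : TamariLE m n a b) (q : ℕ) : extSeq n b q ≤ extSeq n a q := by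
  induction h with
  | refl => exact le_rfl
  | tail _ hcov ih => exact (hcov.extSeq_le q).trans ih

lemma Covers.sum_lt (h : Covers m n a b) : ∑ i, b i < ∑ i, a i := by
  obtain ⟨p, k, hc, rfl⟩ := covers_iff.mp h
  have hp : p < n := hc.le_end.trans_lt hc.end_lt
  refine Finset.sum_lt_sum (fun i _ => ?_) ⟨⟨p, hp⟩, Finset.mem_univ _, ?_⟩
  · simpa only [extSeq_fin] using h.extSeq_le i
  · have hpos := hc.apply_pos
    rw [extSeq_of_lt hp] at hpos
    simp only [decrSeg, le_refl, true_and, if_pos hc.le_end]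
    omega

lemma TamariLE.sum_le (h : TamariLE m n a b) : ∑ i, b i ≤ ∑ i, a i := by
  induction h with
  | refl => exact le_rfl
  | tail _ hcov ih => exact hcov.sum_lt.le.trans ih

lemma IsDyck.extSeq_mono (ha : IsDyck m n a) (hqr : q ≤ i) (hi : i < n) :
    extSeq n a q ≤ extSeq n a i := by
  rw [extSeq_of_lt hi, extSeq_of_lt (by omega)]
  exact ha.1 (Fin.mk_le_mk.mpr hqr)

lemma IsDyck.extSeq_zero (ha : IsDyck m n a) : extSeq n a 0 = 0 := by
  by_cases hn : 0 < n
  · simpa [extSeq_of_lt hn] using ha.2 ⟨0, hn⟩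
  · exact extSeq_of_le (by omega)

lemma Covers.isDyck (h : Covers m n a b) (ha : IsDyck m n a) : IsDyck m n b := by
  obtain ⟨p, k, hc, rfl⟩ := covers_iff.mp h
  refine ⟨fun i i' hii' => ?_, fun i => ?_⟩
  · have hii' : i.val ≤ i'.val := hii'
    have := hc.ascent
    have := ha.extSeq_mono hii' i'.isLt
    have : p ≤ i' → extSeq n a p ≤ extSeq n a i' := fun h => ha.extSeq_mono h i'.isLt
    have : i < p → extSeq n a i ≤ extSeq n a (p - 1) :=
      fun _ => ha.extSeq_mono (by omega) (by have := hc.le_end; have := hc.end_lt; omega)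
    rw [← extSeq_fin (a := decrSeg a p k), ← extSeq_fin (a := decrSeg a p k), extSeq_decrSeg]
    simp only [decr]
    split_ifs <;> omega
  · have := ha.2 i
    simp only [decrSeg]
    split_ifs <;> omega

lemma diffIdx_le (h : extSeq n a q ≠ extSeq n b q) : diffIdx n a b ≤ q := Nat.sInf_le h

lemma extSeq_eq_of_lt_diffIdx (hq : q < diffIdx n a b) : extSeq n a q = extSeq n b q :=
  not_not.mp (Nat.notMem_of_lt_sInf hq)

lemma extSeq_diffIdx_ne (hne : a ≠ b) :
    extSeq n a (diffIdx n a b) ≠ extSeq n b (diffIdx n a b) := by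
  obtain ⟨q, hq⟩ : ∃ q, extSeq n a q ≠ extSeq n b q := by
    by_contra! h
    exact hne (extSeq_injective (funext h))
  exact Nat.sInf_mem (s := {q | extSeq n a q ≠ extSeq n b q}) ⟨q, hq⟩

lemma diffIdx_eq (hne : extSeq n a j ≠ extSeq n b j)
    (hagree : ∀ q < j, extSeq n a q = extSeq n b q) : diffIdx n a b = j :=
  le_antisymm (diffIdx_le hne) (le_of_not_gt fun h =>
    (Nat.sInf_mem (s := {q | extSeq n a q ≠ extSeq n b q}) ⟨j, hne⟩) (hagree _ h))

lemma lbl_decrSeg (hc : IsCoverAt m n (extSeq n a) p k) :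
    lbl n a (decrSeg a p k) = (p, extSeq n a p) := by
  have hpos := hc.apply_pos
  have : diffIdx n a (decrSeg a p k) = p := by
    refine diffIdx_eq ?_ fun q hq => ?_
    · rw [extSeq_decrSeg, decr, if_pos ⟨le_rfl, hc.le_end⟩]
      omega
    · rw [extSeq_decrSeg, decr_apply_of_lt hq]
  rw [lbl, this]

lemma IsCoverAt.le_of_tamariLE (hc : IsCoverAt m n (extSeq n a) p k)
    (hb : TamariLE m n (decrSeg a p k) b) (hagree : ∀ q < j, extSeq n a q = extSeq n b q) :
    j ≤ p := by
  by_contra! hpj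
  have hle := hb.extSeq_le p
  rw [extSeq_decrSeg, decr, if_pos ⟨le_rfl, hc.le_end⟩, ← hagree p hpj] at hle
  have := hc.apply_pos
  omega

lemma exists_isCoverAt_of_tamariLE (ha : IsDyck m n a) (hb : IsDyck m n b)
    (hab : TamariLE m n a b) (hne : extSeq n a j ≠ extSeq n b j)
    (hagree : ∀ q < j, extSeq n a q = extSeq n b q) : ∃ K, IsCoverAt m n (extSeq n a) j K := by
  have hjn : j < n := by
    by_contra! h
    exact hne (by rw [extSeq_of_le h, extSeq_of_le h])
  have hj0 : j ≠ 0 := by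
    rintro rfl
    exact hne (by rw [ha.extSeq_zero, hb.extSeq_zero])
  obtain ⟨K, hK⟩ := exists_primEnd (m := m) (extSeq n a) hjn
  refine ⟨K, hK, Nat.pos_of_ne_zero hj0, ?_⟩
  have := hagree (j - 1) (by omega)
  have := hb.extSeq_mono (Nat.sub_le j 1) hjn
  have := hab.extSeq_le j
  omega

/-- The covers at `j` and `p` commute, unless the primitive subsequence at `j` ends at
`K = p - 1` with a tight step into `p`: then lowering at `p` merges the two subsequences, and
the cover at `j` of `a` is followed by two covers at `p`. -/
lemma tamariLE_decrSeg_diamond (hm : 0 < m) (ha : IsDyck m n a) (hjp : j < p) {K₁ : ℕ}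
    (hj : IsCoverAt m n (extSeq n a) j K) (hp : IsCoverAt m n (extSeq n a) p k)
    (hK₁ : IsCoverAt m n (extSeq n (decrSeg a p k)) j K₁) :
    TamariLE m n (decrSeg a j K) (decrSeg (decrSeg a p k) j K₁) := by
  rw [extSeq_decrSeg] at hK₁
  have hxj := hj.apply_pos
  have hpk := hp.le_end
  have hkn := hp.end_lt
  by_cases htight : p = K + 1 ∧ m * (K + 1 - j) = extSeq n a (K + 1) - extSeq n a j
  · obtain ⟨rfl, heq⟩ := htight
    obtain rfl : k = K₁ := (hj.decr_merge hm hp heq).unique hK₁.toPrimEnd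
    have hp' := hp.decr_left (j := j) (lt_add_one K)
    have hK : 0 < extSeq n a K := hxj.trans_le (ha.extSeq_mono hj.le_end hj.end_lt)
    have hp'' := hp'.decr_self (by
      have := hp.ascent
      simp only [decr, Nat.add_sub_cancel] at this ⊢
      split_ifs <;> omega)
    rw [← extSeq_decrSeg, ← extSeq_decrSeg] at hp''
    rw [← extSeq_decrSeg] at hp'
    rw [← decrSeg_decrSeg_merge a hj.le_end (by omega)]
    exact .head (covers_decrSeg hp') (.single (covers_decrSeg hp''))
  · have hend : k ≤ K ∨ K + 1 < p ∨ m * (K + 1 - j) < extSeq n a (K + 1) - extSeq n a j := by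
      rcases le_or_gt p K with hpK | hKp
      · exact Or.inl (hj.end_le hp hjp hpK)
      · have := hj.le_sub (by omega)
        omega
    obtain rfl : K = K₁ := (hj.decr_right hjp hend).unique hK₁.toPrimEnd
    have hp' : IsCoverAt m n (extSeq n (decrSeg a j K)) p k := by
      rw [extSeq_decrSeg]
      rcases le_or_gt p K with hpK | hKp
      · exact hp.decr_enclosing hjp (hj.end_le hp hjp hpK)
          (hxj.trans_le (ha.extSeq_mono (by omega) (by omega)))
      · exact hp.decr_left hKp
    rw [decrSeg_comm]
    exact .single (covers_decrSeg hp')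

lemma tamariLE_decrSeg_of_tamariLE (hm : 0 < m) (ha : IsDyck m n a) (hb : IsDyck m n b)
    (hab : TamariLE m n a b) (hne : extSeq n a j ≠ extSeq n b j)
    (hagree : ∀ q < j, extSeq n a q = extSeq n b q) (hK : IsCoverAt m n (extSeq n a) j K) :
    TamariLE m n (decrSeg a j K) b := by
  induction hab using Relation.ReflTransGen.head_induction_on generalizing K with
  | refl => exact absurd rfl hne
  | @head a c hac hcb ih =>
    obtain ⟨p, k, hp, rfl⟩ := covers_iff.mp hac
    rcases (hp.le_of_tamariLE hcb hagree).eq_or_lt with rfl | hjp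
    · obtain rfl := hK.unique hp.toPrimEnd
      exact hcb
    have hc : ∀ q ≤ j, extSeq n (decrSeg a p k) q = extSeq n a q := fun q hq => by
      rw [extSeq_decrSeg, decr_apply_of_lt (by omega)]
    have hc_ne : extSeq n (decrSeg a p k) j ≠ extSeq n b j := by rwa [hc j le_rfl]
    have hc_agree : ∀ q < j, extSeq n (decrSeg a p k) q = extSeq n b q := fun q hq => by
      rw [hc q hq.le, hagree q hq]
    have hcd := hac.isDyck ha
    obtain ⟨K₁, hK₁⟩ := exists_isCoverAt_of_tamariLE hcd hb hcb hc_ne hc_agree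
    exact (tamariLE_decrSeg_diamond hm ha hjp hK hp hK₁).trans (ih hcd hc_ne hc_agree hK₁)

end FinSequences

instance : Trans LblLT LblLT LblLT where
  trans h₁ h₂ := by unfold LblLT at *; omega

lemma LexLE.nil (l : List (ℕ × ℕ)) : LexLE [] l := by
  cases l with
  | nil => exact Or.inl rfl
  | cons _ _ => exact Or.inr List.Lex.nil

lemma LexLE.cons {l₁ l₂ : List (ℕ × ℕ)} (h : LexLE l₁ l₂) (L : ℕ × ℕ) :
    LexLE (L :: l₁) (L :: l₂) :=
  h.imp (congrArg _) List.Lex.cons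

section Chains

variable {a b x y : Fin n → ℕ} {c l t : List (Fin n → ℕ)} {j q K : ℕ}

lemma labels_cons_cons (x y : Fin n → ℕ) (l : List (Fin n → ℕ)) :
    labels n (x :: y :: l) = lbl n x y :: labels n (y :: l) := rfl

lemma Rising.tail (h : Rising n (x :: y :: l)) : Rising n (y :: l) := List.IsChain.tail h

lemma Rising.lblLT_of_mem (h : Rising n (x :: y :: l)) {L : ℕ × ℕ}
    (hL : L ∈ labels n (y :: l)) : LblLT (lbl n x y) L :=
  (List.pairwise_cons.mp (List.isChain_iff_pairwise.mp h)).1 L hL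

lemma isMaxChn_iff :
    IsMaxChn m n a b c ↔ c.IsChain (Covers m n) ∧ c.head? = some a ∧ c.getLast? = some b :=
  Iff.rfl

lemma isMaxChn_singleton : IsMaxChn m n a b [x] ↔ x = a ∧ x = b := by
  simp only [isMaxChn_iff, List.isChain_singleton, List.head?_cons, List.getLast?_singleton,
    Option.some_inj, true_and]

lemma isMaxChn_cons_cons :
    IsMaxChn m n a b (x :: y :: l) ↔ x = a ∧ Covers m n a y ∧ IsMaxChn m n y b (y :: l) := by
  simp only [isMaxChn_iff, List.isChain_cons_cons, List.head?_cons, Option.some_inj,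
    List.getLast?_cons_cons]
  constructor
  · rintro ⟨⟨hxy, hl⟩, rfl, hb⟩
    exact ⟨rfl, hxy, hl, trivial, hb⟩
  · rintro ⟨rfl, hxy, hl, -, hb⟩
    exact ⟨⟨hxy, hl⟩, rfl, hb⟩

lemma IsMaxChn.exists_eq_cons (h : IsMaxChn m n a b c) : ∃ t, c = a :: t := by
  obtain ⟨-, hhead, -⟩ := h
  cases c with
  | nil => simp at hhead
  | cons y t => exact ⟨t, by simpa using hhead⟩

lemma IsMaxChn.tamariLE (h : IsMaxChn m n a b c) : TamariLE m n a b := by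
  induction c generalizing a with
  | nil => simp [IsMaxChn] at h
  | cons y t ih =>
    cases t with
    | nil =>
      obtain ⟨rfl, rfl⟩ := isMaxChn_singleton.mp h
      exact .refl
    | cons z r =>
      obtain ⟨rfl, hcov, hr⟩ := isMaxChn_cons_cons.mp h
      exact .head hcov (ih hr)

lemma IsMaxChn.eq_singleton (h : IsMaxChn m n a a c) : c = [a] := by
  obtain ⟨t, rfl⟩ := h.exists_eq_cons
  cases t with
  | nil => rfl
  | cons x r =>
    obtain ⟨-, hcov, hr⟩ := isMaxChn_cons_cons.mp h
    exact absurd (hcov.sum_lt.trans_le hr.tamariLE.sum_le) (lt_irrefl _)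

lemma IsMaxChn.exists_label_le (h : IsMaxChn m n a b c) (hq : extSeq n a q ≠ extSeq n b q) :
    ∃ L ∈ labels n c, L.1 ≤ q := by
  induction c generalizing a with
  | nil => simp [IsMaxChn] at h
  | cons y t ih =>
    cases t with
    | nil =>
      obtain ⟨rfl, rfl⟩ := isMaxChn_singleton.mp h
      exact absurd rfl hq
    | cons z r =>
      obtain ⟨rfl, -, hr⟩ := isMaxChn_cons_cons.mp h
      rw [labels_cons_cons]
      by_cases hz : extSeq n y q = extSeq n z q
      · obtain ⟨L, hL, hLq⟩ := ih hr (hz ▸ hq)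
        exact ⟨L, List.mem_cons_of_mem _ hL, hLq⟩
      · exact ⟨_, List.mem_cons_self, diffIdx_le hz⟩

lemma IsMaxChn.first_step (h : IsMaxChn m n a b c) (hne : extSeq n a j ≠ extSeq n b j)
    (hagree : ∀ q < j, extSeq n a q = extSeq n b q) (hK : IsCoverAt m n (extSeq n a) j K) :
    (∃ r, c = a :: decrSeg a j K :: r ∧ IsMaxChn m n (decrSeg a j K) b (decrSeg a j K :: r)) ∨
      ∃ x r, c = a :: x :: r ∧ IsMaxChn m n x b (x :: r) ∧ j < (lbl n a x).1 ∧
        extSeq n x j = extSeq n a j := by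
  obtain ⟨t, rfl⟩ := h.exists_eq_cons
  cases t with
  | nil =>
    obtain ⟨-, rfl⟩ := isMaxChn_singleton.mp h
    exact absurd rfl hne
  | cons x r =>
    obtain ⟨-, hcov, hr⟩ := isMaxChn_cons_cons.mp h
    obtain ⟨p, k, hp, rfl⟩ := covers_iff.mp hcov
    rcases (hp.le_of_tamariLE hr.tamariLE hagree).eq_or_lt with rfl | hjp
    · obtain rfl := hK.unique hp.toPrimEnd
      exact Or.inl ⟨r, rfl, hr⟩
    · refine Or.inr ⟨_, r, rfl, hr, ?_, ?_⟩
      · rwa [lbl_decrSeg hp]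
      · rw [extSeq_decrSeg, decr_apply_of_lt hjp]

lemma IsMaxChn.rising_cons (h : IsMaxChn m n (decrSeg a j K) b (decrSeg a j K :: t))
    (hrise : Rising n (decrSeg a j K :: t)) (hagree : ∀ q < j, extSeq n a q = extSeq n b q)
    (hK : IsCoverAt m n (extSeq n a) j K) : Rising n (a :: decrSeg a j K :: t) := by
  cases t with
  | nil => exact List.isChain_singleton _
  | cons x r =>
    obtain ⟨-, hcov, hr⟩ := isMaxChn_cons_cons.mp h
    obtain ⟨p, k, hp, rfl⟩ := covers_iff.mp hcov
    have hjp : j ≤ p := hp.le_of_tamariLE hr.tamariLE fun q hq => by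
      rw [extSeq_decrSeg, decr_apply_of_lt hq, hagree q hq]
    refine List.isChain_cons_cons.mpr ⟨?_, hrise⟩
    rw [lbl_decrSeg hK, lbl_decrSeg hp, extSeq_decrSeg]
    rcases hjp.eq_or_lt with rfl | hjp
    · have := hK.apply_pos
      refine Or.inr ⟨rfl, ?_⟩
      simp only [decr, le_refl, true_and, if_pos hK.le_end]
      omega
    · exact Or.inl hjp

end Chains

def HasELChain (m n : ℕ) (a b : Fin n → ℕ) : Prop :=
  ∃ c : List (Fin n → ℕ),
    (IsMaxChn m n a b c ∧ Rising n c) ∧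
    (∀ c' : List (Fin n → ℕ), IsMaxChn m n a b c' → Rising n c' → c' = c) ∧
    (∀ c' : List (Fin n → ℕ), IsMaxChn m n a b c' → LexLE (labels n c) (labels n c'))

lemma hasELChain_self (a : Fin n → ℕ) : HasELChain m n a a :=
  ⟨[a], ⟨⟨List.isChain_singleton a, rfl, rfl⟩, List.isChain_nil⟩,
    fun _ hc _ => hc.eq_singleton, fun c _ => LexLE.nil (labels n c)⟩

theorem hasELChain_of_tamariLE (hm : 0 < m) {a b : Fin n → ℕ} (ha : IsDyck m n a)
    (hb : IsDyck m n b) (hab : TamariLE m n a b) : HasELChain m n a b := by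
  induction hs : ∑ i, a i using Nat.strong_induction_on generalizing a with
  | _ s ih =>
  by_cases hab' : a = b
  · subst hab'
    exact hasELChain_self a
  set j := diffIdx n a b
  have hne := extSeq_diffIdx_ne hab'
  have hagree : ∀ q < j, extSeq n a q = extSeq n b q := fun q hq => extSeq_eq_of_lt_diffIdx hq
  obtain ⟨K, hK⟩ := exists_isCoverAt_of_tamariLE ha hb hab hne hagree
  have hcov := covers_decrSeg hK
  obtain ⟨c, ⟨hc, hrise⟩, huniq, hlex⟩ := ih _ (hs ▸ hcov.sum_lt) (hcov.isDyck ha)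
    (tamariLE_decrSeg_of_tamariLE hm ha hb hab hne hagree hK) rfl
  obtain ⟨t, rfl⟩ := hc.exists_eq_cons
  refine ⟨a :: decrSeg a j K :: t, ⟨isMaxChn_cons_cons.mpr ⟨rfl, hcov, hc⟩,
    hc.rising_cons hrise hagree hK⟩, fun c' hc' hrise' => ?_, fun c' hc' => ?_⟩
  · rcases hc'.first_step hne hagree hK with ⟨r, rfl, hr⟩ | ⟨x, r, rfl, hr, hjx, hxj⟩
    · rw [huniq _ hr hrise'.tail]
    · obtain ⟨L, hL, hLj⟩ := hr.exists_label_le (hxj ▸ hne)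
      have := hrise'.lblLT_of_mem hL
      unfold LblLT at this
      omega
  · rcases hc'.first_step hne hagree hK with ⟨r, rfl, hr⟩ | ⟨x, r, rfl, -, hjx, -⟩
    · exact (hlex _ hr).cons _
    · rw [labels_cons_cons, labels_cons_cons, lbl_decrSeg hK]
      exact Or.inr (List.Lex.rel (Or.inl hjx))

theorem tamari_EL_labeling_general (m n : ℕ) (hm : 0 < m)
    (a b : Fin n → ℕ) (ha : IsDyck m n a) (hb : IsDyck m n b)
    (hab : TamariLE m n a b) :
    ∃ c : List (Fin n → ℕ),
      (IsMaxChn m n a b c ∧ Rising n c) ∧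
      (∀ c' : List (Fin n → ℕ), IsMaxChn m n a b c' → Rising n c' → c' = c) ∧
      (∀ c' : List (Fin n → ℕ), IsMaxChn m n a b c' →
        LexLE (labels n c) (labels n c')) :=
  hasELChain_of_tamariLE hm ha hb hab

/-- The labeling `λ(a,b) = (j, a_j)` is an EL-labeling of `T_n^(m)`: every interval
`[a,b]` contains exactly one rising maximal chain, and this chain is
lexicographically first among all maximal chains in `[a,b]`. -/
theorem tamari_EL_labeling (m n : ℕ) (hm : 0 < m) (hn : 0 < n)
    (a b : Fin n → ℕ) (ha : IsDyck m n a) (hb : IsDyck m n b)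
    (hab : TamariLE m n a b) :
    ∃ c : List (Fin n → ℕ),
      (IsMaxChn m n a b c ∧ Rising n c) ∧
      (∀ c' : List (Fin n → ℕ), IsMaxChn m n a b c' → Rising n c' → c' = c) ∧
      (∀ c' : List (Fin n → ℕ), IsMaxChn m n a b c' →
        LexLE (labels n c) (labels n c')) :=
  tamari_EL_labeling_general m n hm a b ha hb hab
end

section
/- For the edge-labeling λ(a,b) = (j, a_j) of the m-Tamari lattice T_n^(m) (with j the least index where a and b differ, and labels ordered by (i,x) ≤ (j,y) iff i < j or (i = j and x ≥ y)), every interval of T_n^(m) contains at most one falling maximal chain. -/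
/-!
A cover `x ⋖ y` lowers by one a block of `x` that starts at the position `diffIdx x y`, so the
label of the edge reads off that position and the old value there. Two consecutive labels can
therefore only weakly decrease if the position strictly drops: along a falling chain from `a` to
`b` every edge acts strictly to the right of the next one, and the last edge acts at the first
position where `a` and `b` differ. A cover `x ⋖ b` at a given position is determined by `b` and
the monotonicity of `x`, since the lowered block has to end exactly where the primitive
subsequence stops. Hence the penultimate element of a falling chain is determined by `a` and `b`,
and induction from the top end of the chains gives uniqueness.
-/

open scoped Classical

section

variable {m n : ℕ}

section DiffIdx

variable {x y z : Fin n → ℕ}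

theorem extSeq_of_lt_s5 {j : ℕ} (h : j < n) : extSeq n x j = x ⟨j, h⟩ :=
  dif_pos h

theorem diffIdx_self : diffIdx n x x = 0 := by
  simp [diffIdx]

theorem extSeq_eq_of_lt_diffIdx_s5 {j : ℕ} (h : j < diffIdx n x y) :
    extSeq n x j = extSeq n y j :=
  not_not.mp (Nat.notMem_of_lt_sInf h)

theorem extSeq_diffIdx_ne_s5 (h : x ≠ y) :
    extSeq n x (diffIdx n x y) ≠ extSeq n y (diffIdx n x y) := by
  obtain ⟨j, hj⟩ := Function.ne_iff.mp h
  refine Nat.sInf_mem (s := {j | extSeq n x j ≠ extSeq n y j}) ⟨j, ?_⟩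
  simpa [extSeq_of_lt_s5 j.isLt] using hj

theorem diffIdx_eq_of_ne {p : ℕ} (hp : extSeq n x p ≠ extSeq n y p)
    (hlt : ∀ j < p, extSeq n x j = extSeq n y j) : diffIdx n x y = p :=
  le_antisymm (Nat.sInf_le hp) (le_csInf ⟨p, hp⟩ fun j hj => not_lt.mp fun h => hj (hlt j h))

theorem diffIdx_eq_of_lt (hyz : y ≠ z) (h : diffIdx n y z < diffIdx n x y) :
    diffIdx n x z = diffIdx n y z := by
  apply diffIdx_eq_of_ne
  · rw [extSeq_eq_of_lt_diffIdx_s5 h]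
    exact extSeq_diffIdx_ne_s5 hyz
  · intro j hj
    rw [extSeq_eq_of_lt_diffIdx_s5 (hj.trans h), extSeq_eq_of_lt_diffIdx_s5 hj]

theorem diffIdx_lt_of_lblLE (hxy : extSeq n y (diffIdx n x y) < extSeq n x (diffIdx n x y))
    (h : LblLE (lbl n y z) (lbl n x y)) : diffIdx n y z < diffIdx n x y := by
  simp only [LblLE, LblLT, lbl, Prod.mk.injEq] at h
  rcases h with ⟨hd, hv⟩ | hd | ⟨hd, hv⟩
  · rw [hd] at hv
    omega
  · exact hd
  · rw [hd] at hv
    omega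

end DiffIdx

section Covers

variable {x y b x' : Fin n → ℕ}

theorem Covers.exists_spec (h : Covers m n x y) :
    ∃ (i : ℕ) (hi : i + 1 < n) (k : Fin n),
      x ⟨i, by omega⟩ < x ⟨i + 1, hi⟩ ∧ IsPrimEnd m n x ⟨i + 1, hi⟩ k ∧
      (∀ j : Fin n, i + 1 ≤ (j : ℕ) → j ≤ k → y j = x j - 1) ∧
      (∀ j : Fin n, (j : ℕ) < i + 1 ∨ k < j → y j = x j) ∧ diffIdx n x y = i + 1 := by
  obtain ⟨i, hi, k, hlt, hk, rfl⟩ := h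
  have hin : ∀ j : Fin n, i + 1 ≤ (j : ℕ) → j ≤ k →
      (if (⟨i + 1, hi⟩ : Fin n) ≤ j ∧ j ≤ k then x j - 1 else x j) = x j - 1 :=
    fun j h₁ h₂ => if_pos ⟨h₁, h₂⟩
  have hout : ∀ j : Fin n, (j : ℕ) < i + 1 ∨ k < j →
      (if (⟨i + 1, hi⟩ : Fin n) ≤ j ∧ j ≤ k then x j - 1 else x j) = x j :=
    fun j hj => if_neg fun ⟨h₁, h₂⟩ => by
      rw [Fin.le_def] at h₁ h₂; rw [Fin.lt_def] at hj; dsimp only at h₁; omega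
  refine ⟨i, hi, k, hlt, hk, hin, hout, diffIdx_eq_of_ne ?_ fun j hj => ?_⟩
  · rw [extSeq_of_lt_s5 hi, extSeq_of_lt_s5 hi, hin _ le_rfl hk.1]
    omega
  · rw [extSeq_of_lt_s5 (hj.trans hi), extSeq_of_lt_s5 (hj.trans hi), hout _ (.inl hj)]

theorem Covers.diffIdx_pos (h : Covers m n x y) : 0 < diffIdx n x y := by
  obtain ⟨i, -, -, -, -, -, -, hd⟩ := h.exists_spec
  omega

theorem Covers.extSeq_diffIdx_lt (h : Covers m n x y) :
    extSeq n y (diffIdx n x y) < extSeq n x (diffIdx n x y) := by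
  obtain ⟨i, hi, k, hlt, hk, hin, -, hd⟩ := h.exists_spec
  rw [hd, extSeq_of_lt_s5 hi, extSeq_of_lt_s5 hi, hin _ le_rfl hk.1]
  omega

theorem Covers.ne (h : Covers m n x y) : x ≠ y := by
  rintro rfl
  exact lt_irrefl _ h.extSeq_diffIdx_lt

theorem Covers.monotone (h : Covers m n x y) (hx : Monotone x) : Monotone y := by
  obtain ⟨i, hi, k, hlt, -, hin, hout, -⟩ := h.exists_spec
  have hle : ∀ j, y j ≤ x j := fun j => by
    by_cases hj : i + 1 ≤ (j : ℕ) ∧ j ≤ k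
    · rw [hin j hj.1 hj.2]; omega
    · rw [hout j (by rw [Fin.lt_def, Fin.le_def] at *; omega)]
  intro j₁ j₂ h₁₂
  by_cases hj₂ : i + 1 ≤ (j₂ : ℕ) ∧ j₂ ≤ k
  · by_cases hj₁ : i + 1 ≤ (j₁ : ℕ)
    · rw [hin j₁ hj₁ (h₁₂.trans hj₂.2), hin j₂ hj₂.1 hj₂.2]
      exact Nat.sub_le_sub_right (hx h₁₂) 1
    · have := @hx j₁ ⟨i, by omega⟩ (by change (j₁ : ℕ) ≤ i; omega)
      have := hx (show ⟨i + 1, hi⟩ ≤ j₂ from hj₂.1)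
      rw [hout j₁ (.inl (by omega)), hin j₂ hj₂.1 hj₂.2]
      omega
  · rw [hout j₂ (by rw [Fin.lt_def, Fin.le_def] at *; omega)]
    exact (hle j₁).trans (hx h₁₂)

/-- A sequence exceeding `x` by one right after the end `k` of the primitive subsequence of `x`
at `p` climbs too fast to have a primitive subsequence at `p` reaching past `k`. -/
theorem IsPrimEnd.le_of_succ {p k k' : Fin n} (hk : IsPrimEnd m n x p k)
    (hk' : IsPrimEnd m n x' p k') (hp : x p = x' p)
    (hsucc : ∀ j : Fin n, k < j → j ≤ k' → x' j = x j + 1) : k' ≤ k := by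
  by_contra! hkk'
  rcases hk.2.2 with hkn | ⟨hk1, hclimb⟩
  · have := k'.isLt; rw [Fin.lt_def] at hkk'; omega
  set j : Fin n := ⟨k + 1, hk1⟩
  have hjv : (j : ℕ) = k + 1 := rfl
  have hkj : k < j := by rw [Fin.lt_def]; omega
  have hjk' : j ≤ k' := by rw [Fin.lt_def] at hkk'; rw [Fin.le_def]; omega
  have hflat := hk'.2.1 j (hk.1.trans_lt hkj) hjk'
  have := hsucc j hkj hjk'
  rw [hjv] at hflat
  omega

theorem Covers.eq_of_diffIdx_eq (hx : Monotone x) (hx' : Monotone x') (h : Covers m n x b)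
    (h' : Covers m n x' b) (hd : diffIdx n x b = diffIdx n x' b) : x = x' := by
  obtain ⟨i, hi, k, hlt, hk, hin, hout, hdi⟩ := h.exists_spec
  obtain ⟨i', hi', k', hlt', hk', hin', hout', hdi'⟩ := h'.exists_spec
  obtain rfl : i = i' := by omega
  set p : Fin n := ⟨i + 1, hi⟩
  have hxp : x p = x' p := by
    have := hin p le_rfl hk.1; have := hin' p le_rfl hk'.1; omega
  have hk'k : k' ≤ k := hk.le_of_succ hk' hxp fun j hkj hjk' => by
    have := hout j (.inr hkj); have := hin' j (hk.1.trans hkj.le) hjk'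
    have := hx' (hk.1.trans hkj.le); omega
  have hkk' : k ≤ k' := hk'.le_of_succ hk hxp.symm fun j hk'j hjk => by
    have := hout' j (.inr hk'j); have := hin j (hk'.1.trans hk'j.le) hjk
    have := hx (hk'.1.trans hk'j.le); omega
  obtain rfl : k = k' := le_antisymm hkk' hk'k
  funext j
  by_cases hj : p ≤ j ∧ j ≤ k
  · have := hin j hj.1 hj.2; have := hin' j hj.1 hj.2
    have := hx hj.1; have := hx' hj.1; omega
  · have hj' : (j : ℕ) < i + 1 ∨ k < j := by rwa [not_and_or, not_le, not_le] at hj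
    rw [← hout j hj', hout' j hj']

end Covers

section Chains

variable {a b x x' : Fin n → ℕ} {l l' : List (Fin n → ℕ)}

theorem labels_append_cons (l₁ : List (Fin n → ℕ)) (x : Fin n → ℕ) (l₂ : List (Fin n → ℕ)) :
    labels n (l₁ ++ x :: l₂) = labels n (l₁ ++ [x]) ++ labels n (x :: l₂) := by
  induction l₁ with
  | nil => rfl
  | cons y l₁ ih =>
    cases l₁ with
    | nil => rfl
    | cons z l₁ =>
      simp only [labels, List.cons_append, List.tail_cons, List.zipWith_cons_cons] at ih ⊢
      rw [ih]

theorem Falling.left_of_append (h : Falling n (l ++ x :: l')) : Falling n (l ++ [x]) := by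
  rw [Falling, labels_append_cons] at h
  exact h.left_of_append

theorem Falling.right_of_append (h : Falling n (l ++ x :: l')) : Falling n (x :: l') := by
  rw [Falling, labels_append_cons] at h
  exact h.right_of_append

theorem IsMaxChn.left_of_append (h : IsMaxChn m n a b (l ++ x :: l')) :
    IsMaxChn m n a x (l ++ [x]) :=
  ⟨(List.isChain_split.mp h.1).1, by cases l <;> simpa using h.2.1, by simp⟩

theorem IsMaxChn.covers_of_append (h : IsMaxChn m n a b (l ++ [x, b])) : Covers m n x b :=
  List.isChain_pair.mp (List.isChain_split.mp h.1).2

theorem IsMaxChn.monotone_of_mem (h : IsMaxChn m n a b l) (ha : Monotone a) (hx : x ∈ l) :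
    Monotone x :=
  List.IsChain.induction Monotone l h.1 (fun _ _ hyz hy => hyz.monotone hy)
    (fun hne => by
      have ha' := h.2.1
      rw [List.head?_eq_some_head hne, Option.some_inj] at ha'
      rwa [ha']) x hx

theorem IsMaxChn.diffIdx_eq_of_falling (h : IsMaxChn m n a b (l ++ [x, b]))
    (hf : Falling n (l ++ [x, b])) : diffIdx n a b = diffIdx n x b := by
  induction l using List.reverseRecOn generalizing x b with
  | nil =>
    obtain rfl : x = a := by simpa [IsMaxChn] using h.2.1
    rfl
  | append_singleton l w ih =>
    have hprev : diffIdx n a x = diffIdx n w x :=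
      ih (by simpa using h.left_of_append) (by simpa using hf.left_of_append)
    rw [List.append_assoc, List.singleton_append] at h hf
    obtain ⟨-, hwx, hxb⟩ := List.isChain_append_cons_cons.mp h.1
    have hlbl : LblLE (lbl n x b) (lbl n w x) :=
      (List.isChain_pair (R := fun p q => LblLE q p)).mp hf.right_of_append
    have hdrop := diffIdx_lt_of_lblLE hwx.extSeq_diffIdx_lt hlbl
    exact diffIdx_eq_of_lt (List.isChain_pair.mp hxb).ne (hprev ▸ hdrop)

theorem IsMaxChn.ne_of_falling (h : IsMaxChn m n a b (l ++ [x, b]))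
    (hf : Falling n (l ++ [x, b])) : a ≠ b := by
  rintro rfl
  have hd := h.diffIdx_eq_of_falling hf
  rw [diffIdx_self] at hd
  exact h.covers_of_append.diffIdx_pos.ne hd

theorem IsMaxChn.penultimate_eq_of_falling (ha : Monotone a)
    (h : IsMaxChn m n a b (l ++ [x, b])) (hf : Falling n (l ++ [x, b]))
    (h' : IsMaxChn m n a b (l' ++ [x', b])) (hf' : Falling n (l' ++ [x', b])) : x = x' :=
  h.covers_of_append.eq_of_diffIdx_eq (h.monotone_of_mem ha (by simp))
    (h'.monotone_of_mem ha (by simp)) h'.covers_of_append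
    (by rw [← h.diffIdx_eq_of_falling hf, h'.diffIdx_eq_of_falling hf'])

theorem IsMaxChn.eq_of_falling (ha : Monotone a) (h : IsMaxChn m n a b l) (hf : Falling n l)
    (h' : IsMaxChn m n a b l') (hf' : Falling n l') : l = l' := by
  induction l using List.reverseRecOn generalizing b l' with
  | nil => simp [IsMaxChn] at h
  | append_singleton d y ih =>
    obtain rfl : y = b := by simpa [IsMaxChn] using h.2.2
    obtain rfl | ⟨d', y', rfl⟩ := l'.eq_nil_or_concat'
    · simp [IsMaxChn] at h'
    obtain rfl : y = y' := by simpa [IsMaxChn] using h'.2.2.symm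
    rcases d.eq_nil_or_concat' with rfl | ⟨e, x, rfl⟩ <;>
      rcases d'.eq_nil_or_concat' with rfl | ⟨e', x', rfl⟩
    · rfl
    · obtain rfl : y = a := by simpa [IsMaxChn] using h.2.1
      simp only [List.append_assoc, List.singleton_append] at h' hf'
      exact absurd rfl (h'.ne_of_falling hf')
    · obtain rfl : y = a := by simpa [IsMaxChn] using h'.2.1
      simp only [List.append_assoc, List.singleton_append] at h hf
      exact absurd rfl (h.ne_of_falling hf)
    · simp only [List.append_assoc, List.singleton_append] at h hf h' hf'
      obtain rfl := h.penultimate_eq_of_falling ha hf h' hf'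
      rw [ih h.left_of_append hf.left_of_append h'.left_of_append hf'.left_of_append]

end Chains

end

theorem tamari_at_most_one_falling_chain_general (m n : ℕ)
    (a b : Fin n → ℕ) (ha : IsDyck m n a)
    (c c' : List (Fin n → ℕ))
    (hc : IsMaxChn m n a b c) (hcf : Falling n c)
    (hc' : IsMaxChn m n a b c') (hcf' : Falling n c') :
    c = c' :=
  hc.eq_of_falling ha.1 hcf hc' hcf'

/-- With respect to the labeling `λ(a,b) = (j, a_j)`, every interval of `T_n^(m)`
contains at most one falling maximal chain. -/
theorem tamari_at_most_one_falling_chain (m n : ℕ) (hm : 0 < m) (hn : 0 < n)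
    (a b : Fin n → ℕ) (ha : IsDyck m n a) (hb : IsDyck m n b)
    (hab : TamariLE m n a b)
    (c c' : List (Fin n → ℕ))
    (hc : IsMaxChn m n a b c) (hcf : Falling n c)
    (hc' : IsMaxChn m n a b c') (hcf' : Falling n c') :
    c = c' :=
  tamari_at_most_one_falling_chain_general m n a b ha c c' hc hcf hc' hcf'
end

section
/- The number of elements a of the m-Tamari lattice T_n^(m) with μ(a, 1̂) ≠ 0 equals 2^{n-1}, where 1̂ is the maximal element and μ is the Möbius function. -/
open scoped Classical

/-- The elements of the `m`-Tamari lattice `T_n^(m)`. -/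
def Tam (m n : ℕ) : Type := {a : Fin n → ℕ // IsDyck m n a}

/-- `μ` is the Möbius function of `T_n^(m)`. -/
def IsMobius (m n : ℕ) (μ : Tam m n → Tam m n → ℤ) : Prop :=
  ∀ a b : Tam m n, TamariLE m n a.1 b.1 →
    ∑ᶠ c ∈ {c : Tam m n | TamariLE m n a.1 c.1 ∧ TamariLE m n c.1 b.1}, μ a c =
      if a = b then 1 else 0

/-- The minimal element `(0, m, 2m, …, (n-1)m)` of `T_n^(m)`. -/
def botSeq (m n : ℕ) : Fin n → ℕ := fun i => m * i.val

lemma botSeq_isDyck (m n : ℕ) : IsDyck m n (botSeq m n) :=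
  ⟨fun i j h => Nat.mul_le_mul_left m h, fun _ => le_rfl⟩

/-- The maximal element `(0, 0, …, 0)` of `T_n^(m)`. -/
def topSeq (n : ℕ) : Fin n → ℕ := fun _ => 0

lemma topSeq_isDyck (m n : ℕ) : IsDyck m n (topSeq n) :=
  ⟨monotone_const, fun _ => Nat.zero_le _⟩

/-- The set `D` of indices where two sequences differ and `a` has an ascent. -/
noncomputable def Dset (n : ℕ) (a b : ℕ → ℕ) : Finset ℕ :=
  (Finset.range n).filter (fun j => 1 ≤ j ∧ a j ≠ b j ∧ a (j - 1) < a j)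

/-- The quantity `ps(a, j)` from the paper, relative to a set `D` of indices. -/
noncomputable def ps (m : ℕ) (D : Finset ℕ) (a : ℕ → ℕ) (j : ℕ) : ℕ :=
  (D.filter (fun i => i < j ∧ a j - 1 - a i < m * (j - i) ∧
    ∀ k, i < k → k < j → a k - a i < m * (k - i))).card

/-!
For a Dyck sequence `a` put `f a = (-1) ^ #(ascents a)` if all steps of `a` are `0` or `1`, and
`f a = 0` otherwise. A binary sequence `c` lies above `a` exactly when the ascents of `c` are
ascents of `a`: a cover can only destroy the ascent just before the block it lowers, and
conversely `a` descends to `c` by repeatedly lowering the primitive block that starts where `a`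
first exceeds `c`, since `a - c` is nondecreasing. Hence `∑_{c ≥ a} f c = ∑_{S ⊆ asc a} (-1)^#S`
vanishes unless `a = 1̂`. As the Möbius matrix is the inverse of the zeta matrix, this forces
`μ(a, 1̂) = f a`, and the binary Dyck sequences correspond to their ascent sets, the subsets of
`{0, …, n - 2}`.
-/

variable {m n : ℕ}

def AscentAt (x : Fin n → ℕ) (p : ℕ) : Prop :=
  ∃ h : p + 1 < n, x ⟨p, Nat.lt_of_succ_lt h⟩ < x ⟨p + 1, h⟩

noncomputable def ascents (x : Fin n → ℕ) : Finset ℕ :=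
  (Finset.range (n - 1)).filter (AscentAt x)

def IsBinary (x : Fin n → ℕ) : Prop :=
  ∀ p (h : p + 1 < n), x ⟨p + 1, h⟩ ≤ x ⟨p, Nat.lt_of_succ_lt h⟩ + 1

def ofAscents (n : ℕ) (S : Finset ℕ) : Fin n → ℕ :=
  fun j => ∑ q ∈ Finset.range j, if q ∈ S then 1 else 0

def lowerBlock (x : Fin n → ℕ) (s k : Fin n) : Fin n → ℕ :=
  fun j => if s ≤ j ∧ j ≤ k then x j - 1 else x j

theorem mem_ascents {x : Fin n → ℕ} {p : ℕ} : p ∈ ascents x ↔ AscentAt x p := by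
  simp only [ascents, Finset.mem_filter, Finset.mem_range, and_iff_right_iff_imp]
  rintro ⟨h, -⟩
  omega

theorem Fin.monotone_of_forall_le_succ {α : Type*} [Preorder α] {f : Fin n → α}
    (h : ∀ p (hp : p + 1 < n), f ⟨p, Nat.lt_of_succ_lt hp⟩ ≤ f ⟨p + 1, hp⟩) : Monotone f := by
  cases n with
  | zero => exact fun i => i.elim0
  | succ n => exact Fin.monotone_iff_le_succ.2 fun i => h i (by omega)

theorem IsDyck.apply_zero {x : Fin n → ℕ} (hx : IsDyck m n x) (h : 0 < n) : x ⟨0, h⟩ = 0 :=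
  Nat.le_zero.mp (hx.2 ⟨0, h⟩)

theorem IsDyck.le_succ {x : Fin n → ℕ} (hx : IsDyck m n x) (p : ℕ) (hp : p + 1 < n) :
    x ⟨p, Nat.lt_of_succ_lt hp⟩ ≤ x ⟨p + 1, hp⟩ :=
  hx.1 (Fin.mk_le_mk.mpr p.le_succ)

theorem IsPrimEnd.lt_succ (hm : 0 < m) {x : Fin n → ℕ} {s k : Fin n}
    (hpe : IsPrimEnd m n x s k) (hk : k.val + 1 < n) : x k < x ⟨k.val + 1, hk⟩ := by
  obtain ⟨hsk, hlt, hend | ⟨_, hge⟩⟩ := hpe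
  · omega
  obtain rfl | hsk := hsk.eq_or_lt
  · rw [Nat.add_sub_cancel_left, mul_one] at hge
    omega
  · have hk := hlt k hsk le_rfl
    have hsk : s.val < k.val := hsk
    rw [show k.val + 1 - s.val = (k.val - s.val) + 1 by omega, Nat.mul_succ] at hge
    omega

theorem exists_isPrimEnd (x : Fin n → ℕ) (s : Fin n) : ∃ k, IsPrimEnd m n x s k := by
  let P : ℕ → Prop := fun t => s.val ≤ t ∧
    (t + 1 = n ∨ ∃ h : t + 1 < n, m * (t + 1 - s.val) ≤ x ⟨t + 1, h⟩ - x s)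
  have hs := s.isLt
  have hP : ∃ t, P t := ⟨n - 1, by omega, Or.inl (by omega)⟩
  obtain ⟨hsk, hend⟩ := Nat.find_spec hP
  have hk : Nat.find hP < n := by rcases hend with h | ⟨h, -⟩ <;> omega
  refine ⟨⟨Nat.find hP, hk⟩, hsk, ?_, hend⟩
  rintro ⟨j, hj⟩ hsj hjk
  have hsj : s.val < j := hsj
  obtain ⟨j, rfl⟩ : ∃ t, j = t + 1 := ⟨j - 1, by omega⟩
  have hjk : j + 1 ≤ Nat.find hP := hjk
  have hnot : ¬ P j := Nat.find_min hP (by omega)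
  simp only [P, not_and, not_or, not_exists, not_le] at hnot
  exact (hnot (by omega)).2 hj

theorem sum_lowerBlock_lt {x : Fin n → ℕ} {s k : Fin n} (hs : 0 < x s) (hsk : s ≤ k) :
    ∑ j, lowerBlock x s k j < ∑ j, x j := by
  refine Finset.sum_lt_sum (fun j _ => by unfold lowerBlock; split_ifs <;> omega)
    ⟨s, Finset.mem_univ _, ?_⟩
  rw [lowerBlock, if_pos ⟨le_rfl, hsk⟩]
  omega

section LowerBlock

variable {x : Fin n → ℕ} {i : ℕ} {hi : i + 1 < n} {k : Fin n}

theorem isDyck_lowerBlock (hx : IsDyck m n x)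
    (hasc : x ⟨i, Nat.lt_of_succ_lt hi⟩ < x ⟨i + 1, hi⟩) :
    IsDyck m n (lowerBlock x ⟨i + 1, hi⟩ k) := by
  refine ⟨Fin.monotone_of_forall_le_succ fun p hp => ?_, fun j => ?_⟩
  · obtain ⟨k, hk⟩ := k
    have hstep := hx.le_succ p hp
    simp only [lowerBlock, Fin.le_def]
    split_ifs with h₁ h₂ h₂
    · omega
    · omega
    · obtain rfl : p = i := by omega
      omega
    · omega
  · have := hx.2 j
    unfold lowerBlock
    split_ifs <;> omega

theorem ascentAt_lowerBlock_iff (hm : 0 < m) (hx : Monotone x)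
    (hasc : x ⟨i, Nat.lt_of_succ_lt hi⟩ < x ⟨i + 1, hi⟩) (hpe : IsPrimEnd m n x ⟨i + 1, hi⟩ k)
    {p : ℕ} (hp : p ≠ i) : AscentAt (lowerBlock x ⟨i + 1, hi⟩ k) p ↔ AscentAt x p := by
  refine exists_congr fun hp1 => ?_
  obtain ⟨k, hk⟩ := k
  have hpos : i + 1 ≤ p → 0 < x ⟨p, Nat.lt_of_succ_lt hp1⟩ := fun h =>
    hasc.trans_le (hx (Fin.mk_le_mk.mpr h)) |>.trans_le' (Nat.zero_le _)
  simp only [lowerBlock, Fin.mk_le_mk]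
  split_ifs with h₁ h₂ h₂
  · have := hpos h₁.1
    omega
  · obtain rfl : p = k := by omega
    have : x ⟨p, _⟩ < x ⟨p + 1, hp1⟩ := hpe.lt_succ hm hp1
    have := hpos h₁.1
    omega
  · omega
  · rfl

end LowerBlock

theorem Covers.isDyck_s12 {x y : Fin n → ℕ} (h : Covers m n x y) (hx : IsDyck m n x) :
    IsDyck m n y := by
  obtain ⟨i, hi, k, hasc, -, rfl⟩ := h
  exact isDyck_lowerBlock hx hasc

theorem Covers.ascents_subset (hm : 0 < m) {x y : Fin n → ℕ} (h : Covers m n x y)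
    (hx : IsDyck m n x) : ascents y ⊆ ascents x := by
  obtain ⟨i, hi, k, hasc, hpe, rfl⟩ := h
  intro p
  simp only [mem_ascents]
  obtain rfl | hp := eq_or_ne p i
  · exact fun _ => ⟨hi, hasc⟩
  · exact (ascentAt_lowerBlock_iff hm hx.1 hasc hpe hp).mp

theorem TamariLE.isDyck_s12 {x y : Fin n → ℕ} (h : TamariLE m n x y)
    (hx : IsDyck m n x) : IsDyck m n y := by
  induction h with
  | refl => exact hx
  | tail _ hc ih => exact hc.isDyck_s12 ih

theorem TamariLE.ascents_subset (hm : 0 < m) {x y : Fin n → ℕ} (h : TamariLE m n x y)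
    (hx : IsDyck m n x) : ascents y ⊆ ascents x := by
  induction h with
  | refl => exact le_rfl
  | tail hxb hc ih => exact (hc.ascents_subset hm (TamariLE.isDyck_s12 hxb hx)).trans ih

section OfAscents

variable {S : Finset ℕ}

theorem ofAscents_zero (h : 0 < n) : ofAscents n S ⟨0, h⟩ = 0 := by
  simp [ofAscents]

theorem ofAscents_succ {p : ℕ} (hp : p + 1 < n) :
    ofAscents n S ⟨p + 1, hp⟩ = ofAscents n S ⟨p, Nat.lt_of_succ_lt hp⟩ + if p ∈ S then 1 else 0 :=
  Finset.sum_range_succ _ _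

theorem ofAscents_le (j : Fin n) : ofAscents n S j ≤ j := by
  calc ofAscents n S j ≤ ∑ _q ∈ Finset.range j, 1 :=
        Finset.sum_le_sum fun q _ => by split_ifs <;> simp
    _ = j := by simp

theorem isBinary_ofAscents : IsBinary (ofAscents n S) := fun p hp => by
  rw [ofAscents_succ]
  split_ifs <;> omega

theorem isDyck_ofAscents (hm : 0 < m) : IsDyck m n (ofAscents n S) :=
  ⟨Fin.monotone_of_forall_le_succ fun p hp => by rw [ofAscents_succ]; omega,
    fun j => (ofAscents_le j).trans (Nat.le_mul_of_pos_left _ hm)⟩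

theorem ascentAt_ofAscents_iff {p : ℕ} (hp : p + 1 < n) :
    AscentAt (ofAscents n S) p ↔ p ∈ S := by
  refine ⟨fun ⟨_, h⟩ => ?_, fun h => ⟨hp, ?_⟩⟩ <;> rw [ofAscents_succ] at * <;> split_ifs at * <;>
    first | assumption | omega

theorem ascents_ofAscents (hS : S ⊆ Finset.range (n - 1)) : ascents (ofAscents n S) = S := by
  ext p
  rw [mem_ascents]
  constructor
  · rintro ⟨hp, h⟩
    exact (ascentAt_ofAscents_iff hp).mp ⟨hp, h⟩
  · intro h
    have := Finset.mem_range.mp (hS h)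
    exact (ascentAt_ofAscents_iff (by omega)).mpr h

theorem ofAscents_ascents {x : Fin n → ℕ} (hx : IsDyck m n x) (hb : IsBinary x) :
    ofAscents n (ascents x) = x := by
  funext ⟨j, hj⟩
  induction j with
  | zero => rw [ofAscents_zero, hx.apply_zero]
  | succ p ih =>
    rw [ofAscents_succ hj, ih]
    have := hx.le_succ p hj
    have := hb p hj
    by_cases h : x ⟨p, Nat.lt_of_succ_lt hj⟩ < x ⟨p + 1, hj⟩
    · rw [if_pos (mem_ascents.mpr ⟨hj, h⟩)]
      omega
    · rw [if_neg fun hp => h (mem_ascents.mp hp).2]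
      omega

end OfAscents

theorem ascents_topSeq : ascents (topSeq n) = ∅ := by
  simp [ascents, AscentAt, topSeq]

theorem eq_topSeq_of_ascents_eq_empty {x : Fin n → ℕ} (hx : IsDyck m n x) (h : ascents x = ∅) :
    x = topSeq n := by
  have hflat : ∀ p (hp : p + 1 < n), x ⟨p + 1, hp⟩ ≤ x ⟨p, Nat.lt_of_succ_lt hp⟩ := fun p hp =>
    not_lt.mp fun hlt => by simpa [h] using mem_ascents.mpr ⟨hp, hlt⟩
  rw [← ofAscents_ascents hx fun p hp => (hflat p hp).trans (Nat.le_succ _), h]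
  funext j
  simp [ofAscents, topSeq]

theorem monotone_sub_of_ascents_subset {x c : Fin n → ℕ} (hx : Monotone x) (hcb : IsBinary c)
    (hsub : ascents c ⊆ ascents x) : Monotone fun j => (x j : ℤ) - c j := by
  refine Fin.monotone_of_forall_le_succ fun p hp => ?_
  have hxp : x ⟨p, Nat.lt_of_succ_lt hp⟩ ≤ x ⟨p + 1, hp⟩ := hx (Fin.mk_le_mk.mpr p.le_succ)
  have := hcb p hp
  by_cases hcp : c ⟨p, Nat.lt_of_succ_lt hp⟩ < c ⟨p + 1, hp⟩
  · have := (mem_ascents.mp (hsub (mem_ascents.mpr ⟨hp, hcp⟩))).2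
    omega
  · omega

section Descent

variable {c x : Fin n → ℕ} (hc : IsDyck m n c) (hcb : IsBinary c) (hx : IsDyck m n x)
  (hsub : ascents c ⊆ ascents x)
include hc hcb hx hsub

theorem le_of_ascents_subset (j : Fin n) : c j ≤ x j := by
  have h0 : 0 < n := j.pos
  have hmono := monotone_sub_of_ascents_subset hx.1 hcb hsub
    (show (⟨0, h0⟩ : Fin n) ≤ j from Nat.zero_le _)
  simp only [hx.apply_zero h0, hc.apply_zero h0] at hmono
  omega

theorem exists_eq_and_lt_of_ascents_subset (hne : x ≠ c) :
    ∃ i, ∃ hi : i + 1 < n, x ⟨i, Nat.lt_of_succ_lt hi⟩ = c ⟨i, Nat.lt_of_succ_lt hi⟩ ∧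
      ∀ q : Fin n, i + 1 ≤ q.val → c q < x q := by
  have hle := le_of_ascents_subset hc hcb hx hsub
  have hex : ∃ j, ∃ hj : j < n, c ⟨j, hj⟩ < x ⟨j, hj⟩ := by
    by_contra! h
    exact hne (funext fun j => (h j j.isLt).antisymm (hle j))
  obtain ⟨j, ⟨hj, hlt⟩, hmin⟩ : ∃ j, (∃ hj : j < n, c ⟨j, hj⟩ < x ⟨j, hj⟩) ∧
      ∀ q < j, ¬ ∃ hq : q < n, c ⟨q, hq⟩ < x ⟨q, hq⟩ :=
    ⟨Nat.find hex, Nat.find_spec hex, fun q => Nat.find_min hex⟩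
  rcases j with _ | i
  · rw [hx.apply_zero hj, hc.apply_zero hj] at hlt
    exact absurd hlt (lt_irrefl 0)
  refine ⟨i, hj, ?_, fun q hq => ?_⟩
  · by_contra hne
    exact hmin i i.lt_succ_self ⟨_, (hle _).lt_of_ne' hne⟩
  · have := monotone_sub_of_ascents_subset hx.1 hcb hsub
      (show (⟨i + 1, hj⟩ : Fin n) ≤ q from hq)
    simp only at this
    omega

end Descent

theorem tamariLE_of_ascents_subset (hm : 0 < m) {c : Fin n → ℕ} (hc : IsDyck m n c)
    (hcb : IsBinary c) {x : Fin n → ℕ} (hx : IsDyck m n x) (hsub : ascents c ⊆ ascents x) :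
    TamariLE m n x c := by
  induction hw : ∑ j, x j using Nat.strong_induction_on generalizing x with
  | _ w ih =>
  by_cases hxc : x = c
  · exact hxc ▸ .refl
  obtain ⟨i, hi, heq, hgap⟩ := exists_eq_and_lt_of_ascents_subset hc hcb hx hsub hxc
  have hgap_i := hgap ⟨i + 1, hi⟩ le_rfl
  have hasc : x ⟨i, Nat.lt_of_succ_lt hi⟩ < x ⟨i + 1, hi⟩ := by
    have := hc.le_succ i hi
    omega
  obtain ⟨k, hpe⟩ := exists_isPrimEnd (m := m) x ⟨i + 1, hi⟩
  have hcov : Covers m n x (lowerBlock x ⟨i + 1, hi⟩ k) := ⟨i, hi, k, hasc, hpe, rfl⟩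
  refine .head hcov (ih _ ?_ (hcov.isDyck_s12 hx) ?_ rfl)
  · exact hw ▸ sum_lowerBlock_lt (by omega) hpe.1
  intro p hp
  rw [mem_ascents] at hp ⊢
  obtain rfl | hpi := eq_or_ne p i
  · obtain ⟨_, hcp⟩ := hp
    have hik : p + 1 ≤ k.val := hpe.1
    refine ⟨hi, ?_⟩
    simp only [lowerBlock, Fin.le_def]
    split_ifs <;> omega
  · exact (ascentAt_lowerBlock_iff hm hx.1 hasc hpe hpi).mpr
      (mem_ascents.mp (hsub (mem_ascents.mpr hp)))

theorem tamariLE_topSeq (hm : 0 < m) {x : Fin n → ℕ} (hx : IsDyck m n x) :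
    TamariLE m n x (topSeq n) :=
  tamariLE_of_ascents_subset hm (topSeq_isDyck m n) (fun p hp => by simp [topSeq]) hx
    (ascents_topSeq ▸ Finset.empty_subset _)

open Matrix in
theorem mobius_eq_of_sum_eq {α : Type*} [Fintype α] {r : α → α → Prop} (hrefl : ∀ a, r a a)
    (htrans : ∀ a b c, r a b → r b c → r a c) {μ : α → α → ℤ}
    (hμ : ∀ a b, r a b → ∑ c with r a c ∧ r c b, μ a c = if a = b then 1 else 0)
    {t : α} (ht : ∀ a, r a t) {f : α → ℤ}
    (hf : ∀ a, ∑ c with r a c, f c = if a = t then 1 else 0) (a : α) : μ a t = f a := by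
  let M : Matrix α α ℤ := .of fun u v => if r u v then μ u v else 0
  let Z : Matrix α α ℤ := .of fun u v => if r u v then 1 else 0
  have hMZ : M * Z = 1 := by
    ext u v
    rw [Matrix.mul_apply, Matrix.one_apply]
    by_cases huv : r u v
    · rw [← hμ u v huv, Finset.sum_filter]
      refine Finset.sum_congr rfl fun c _ => ?_
      simp only [M, Z, Matrix.of_apply]
      split_ifs <;> simp_all
    · rw [if_neg fun h : u = v => huv (h ▸ hrefl u)]
      refine Finset.sum_eq_zero fun c _ => ?_
      simp only [M, Z, Matrix.of_apply]
      split_ifs with h₁ h₂ <;> first | exact absurd (htrans _ _ _ h₁ h₂) huv | simp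
  have hZf : Z *ᵥ f = Pi.single t 1 := by
    ext u
    simp only [Matrix.mulVec, dotProduct, Z, Matrix.of_apply, ite_mul, one_mul, zero_mul,
      ← Finset.sum_filter, hf, Pi.single_apply]
  calc μ a t = (M *ᵥ Pi.single t 1) a := by simp [M, ht]
    _ = f a := by rw [← hZf, Matrix.mulVec_mulVec, hMZ, Matrix.one_mulVec]

instance (m n : ℕ) : Finite (Tam m n) :=
  Finite.of_injective (β := Fin n → Fin (m * n + 1))
    (fun a j => ⟨a.1 j, Nat.lt_succ_of_le ((a.2.2 j).trans (Nat.mul_le_mul_left m j.isLt.le))⟩)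
    fun _ _ h => Subtype.ext (funext fun j => congrArg Fin.val (congrFun h j))

noncomputable instance (m n : ℕ) : Fintype (Tam m n) := Fintype.ofFinite _

theorem IsMobius.sum_filter_eq {μ : Tam m n → Tam m n → ℤ} (hμ : IsMobius m n μ) (a b : Tam m n)
    (hab : TamariLE m n a.1 b.1) :
    ∑ c with TamariLE m n a.1 c.1 ∧ TamariLE m n c.1 b.1, μ a c = if a = b then 1 else 0 := by
  rw [← hμ a b hab, finsum_mem_eq_toFinset_sum, Set.toFinset_ofPred]

noncomputable def binaryEquiv (hm : 0 < m) :
    {a : Tam m n // IsBinary a.1} ≃ (Finset.range (n - 1)).powerset where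
  toFun a := ⟨ascents a.1.1, Finset.mem_powerset.mpr (Finset.filter_subset _ _)⟩
  invFun S := ⟨⟨ofAscents n S, isDyck_ofAscents hm⟩, isBinary_ofAscents⟩
  left_inv a := Subtype.ext (Subtype.ext (ofAscents_ascents a.1.2 a.2))
  right_inv S := Subtype.ext (ascents_ofAscents (Finset.mem_powerset.mp S.2))

theorem sum_tamariLE_signed_binary (hm : 0 < m) (a : Tam m n) :
    ∑ c : Tam m n with TamariLE m n a.1 c.1,
        (if IsBinary c.1 then (-1 : ℤ) ^ (ascents c.1).card else 0) =
      if a = ⟨topSeq n, topSeq_isDyck m n⟩ then 1 else 0 := by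
  rw [← Finset.sum_filter, Finset.filter_filter]
  calc _ = ∑ S ∈ (ascents a.1).powerset, (-1 : ℤ) ^ S.card := by
        refine Finset.sum_nbij' (fun c : Tam m n => ascents c.1)
          (fun S => (⟨ofAscents n S, isDyck_ofAscents hm⟩ : Tam m n)) (fun c hc => ?_)
          (fun S hS => ?_) (fun c hc => ?_) (fun S hS => ?_) fun _ _ => rfl
        · exact Finset.mem_powerset.mpr ((Finset.mem_filter.mp hc).2.1.ascents_subset hm a.2)
        · have hS := Finset.mem_powerset.mp hS
          have hS' : S ⊆ Finset.range (n - 1) := hS.trans (Finset.filter_subset _ _)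
          refine Finset.mem_filter.mpr ⟨Finset.mem_univ _, ?_, isBinary_ofAscents⟩
          exact tamariLE_of_ascents_subset hm (isDyck_ofAscents hm) isBinary_ofAscents a.2
            ((ascents_ofAscents hS').trans_subset hS)
        · exact Subtype.ext (ofAscents_ascents c.2 (Finset.mem_filter.mp hc).2.2)
        · exact ascents_ofAscents ((Finset.mem_powerset.mp hS).trans (Finset.filter_subset _ _))
    _ = _ := by
      rw [Finset.sum_powerset_neg_one_pow_card]
      exact if_congr ⟨fun h => Subtype.ext (eq_topSeq_of_ascents_eq_empty a.2 h),
        fun h => h ▸ ascents_topSeq⟩ rfl rfl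

theorem IsMobius.apply_top (hm : 0 < m) {μ : Tam m n → Tam m n → ℤ} (hμ : IsMobius m n μ)
    (a : Tam m n) : μ a ⟨topSeq n, topSeq_isDyck m n⟩ =
      if IsBinary a.1 then (-1 : ℤ) ^ (ascents a.1).card else 0 :=
  mobius_eq_of_sum_eq (r := fun a b : Tam m n => TamariLE m n a.1 b.1) (fun _ => .refl)
    (fun _ _ _ => .trans) hμ.sum_filter_eq (fun a => tamariLE_topSeq hm a.2)
    (sum_tamariLE_signed_binary hm) a

theorem tamari_spherical_to_top_count_general (m n : ℕ) (hm : 0 < m)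
    (μ : Tam m n → Tam m n → ℤ) (hμ : IsMobius m n μ) :
    Nat.card {a : Tam m n // μ a ⟨topSeq n, topSeq_isDyck m n⟩ ≠ 0} = 2 ^ (n - 1) := by
  have hsupport : ∀ a, μ a ⟨topSeq n, topSeq_isDyck m n⟩ ≠ 0 ↔ IsBinary a.1 := fun a => by
    rw [hμ.apply_top hm]
    split_ifs with h <;> simp [h]
  rw [Nat.card_congr ((Equiv.subtypeEquivRight hsupport).trans (binaryEquiv hm)),
    Nat.card_eq_finsetCard, Finset.card_powerset, Finset.card_range]

/-- The number of elements `a` of `T_n^(m)` with `μ(a, 1̂) ≠ 0` is `2^(n-1)`. -/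
theorem tamari_spherical_to_top_count (m n : ℕ) (hm : 0 < m) (hn : 0 < n)
    (μ : Tam m n → Tam m n → ℤ) (hμ : IsMobius m n μ) :
    Nat.card {a : Tam m n // μ a ⟨topSeq n, topSeq_isDyck m n⟩ ≠ 0} = 2 ^ (n - 1) :=
  tamari_spherical_to_top_count_general m n hm μ hμ
end

section
/- For a subset D ⊆ {2,3,...,n}, the set diff_D(1̂) = {b ∈ T_n^(m) : b differs from the all-zero sequence exactly in the positions of D} is nonempty if and only if D = ∅ or D = {i, i+1, ..., n} for some 2 ≤ i ≤ n. -/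
open scoped Classical

/-- `diff_D(1̂) ≠ ∅` if and only if `D = ∅` or `D` is a final segment `{i,…,n-1}`
(0-indexed; paper's `{i,…,n}` with `2 ≤ i ≤ n`). -/
theorem diffD_top_nonempty_iff (m n : ℕ) (hm : 0 < m) (hn : 0 < n)
    (D : Finset ℕ) (hD : D ⊆ Finset.Ico 1 n) :
    (∃ b : Fin n → ℕ, IsDyck m n b ∧
        (Finset.Ico 1 n).filter (fun i => extSeq n b i ≠ 0) = D) ↔
      (D = ∅ ∨ ∃ i : ℕ, 1 ≤ i ∧ i < n ∧ D = Finset.Ico i n) := by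
  constructor
  · rintro ⟨b, ⟨hmono, _⟩, rfl⟩
    by_cases hne : (Finset.Ico 1 n).filter (fun i => extSeq n b i ≠ 0) = ∅
    · exact Or.inl hne
    · right
      obtain ⟨i, hi⟩ := Finset.nonempty_iff_ne_empty.2 hne
      set S := (Finset.Ico 1 n).filter (fun i => extSeq n b i ≠ 0) with hS
      have hSne : S.Nonempty := ⟨i, hi⟩
      set i₀ := S.min' hSne with hi₀
      have hmem : i₀ ∈ S := S.min'_mem hSne
      simp only [hS, Finset.mem_filter, Finset.mem_Ico] at hmem
      obtain ⟨⟨h1, h2⟩, h3⟩ := hmem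
      refine ⟨i₀, h1, h2, ?_⟩
      ext j
      simp only [hS, Finset.mem_filter, Finset.mem_Ico]
      constructor
      · rintro ⟨⟨_, hjn⟩, hj0⟩
        exact ⟨S.min'_le j (by simp [hS, Finset.mem_filter, Finset.mem_Ico, *]
          <;> omega), hjn⟩
      · rintro ⟨hij, hjn⟩
        refine ⟨⟨le_trans h1 hij, hjn⟩, ?_⟩
        have : extSeq n b i₀ ≤ extSeq n b j := by
          simp only [extSeq, dif_pos h2, dif_pos hjn]
          exact hmono (by exact_mod_cast hij)
        omega
  · rintro (rfl | ⟨i, h1, h2, rfl⟩)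
    · refine ⟨fun _ => 0, ⟨monotone_const, fun _ => by simp⟩, ?_⟩
      simp [extSeq]
    · refine ⟨fun j => if i ≤ j.val then 1 else 0, ⟨?_, ?_⟩, ?_⟩
      · intro a b hab
        dsimp only
        split <;> split <;> omega
      · intro j
        dsimp only
        split
        · have : 1 ≤ j.val := le_trans h1 (by assumption)
          calc 1 ≤ m * 1 := by omega
            _ ≤ m * j.val := Nat.mul_le_mul_left m this
        · omega
      · ext j
        simp only [Finset.mem_filter, Finset.mem_Ico, extSeq]
        constructor
        · rintro ⟨⟨hj1, hjn⟩, hj0⟩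
          refine ⟨?_, hjn⟩
          by_contra h
          simp [dif_pos hjn, if_neg (by omega : ¬ i ≤ j)] at hj0
        · rintro ⟨hij, hjn⟩
          refine ⟨⟨le_trans h1 hij, hjn⟩, ?_⟩
          simp [dif_pos hjn, if_pos hij]
end
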